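/- arXiv:1901.10179 — 5 statements merged into one kernel-verified Lean document; each statement's English description precedes it below -/
import Mathlib

section
/- Let v ≥ 6, let ℓ ≥ 3, and let a : Fin ℓ → Fin v and b : Fin ℓ → Fin v be such that the 2ℓ points a_0,...,a_{ℓ-1}, b_0,...,b_{ℓ-1} are pairwise distinct. Then the cycle trade T(C) = Σ_{t ∈ Fin ℓ} E(t, t+1) (indices of the cycle taken mod ℓ) is a simple T(2,3,v) trade of volume 2ℓ. -/
/-- A `T(2,3,v)` trade: `f B = 0` unless `|B| = 3`, and every pair is balanced. -/
def isTrade (v : ℕ) (f : Finset (Fin v) → ℤ) : Prop :=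
  (∀ B : Finset (Fin v), B.card ≠ 3 → f B = 0) ∧
  ∀ P : Finset (Fin v), P.card = 2 →
    ∑ B ∈ Finset.univ.filter (fun B : Finset (Fin v) => B.card = 3 ∧ P ⊆ B), f B = 0

/-- A trade is simple if every value lies in `{-1, 0, 1}`. -/
def isSimple (v : ℕ) (f : Finset (Fin v) → ℤ) : Prop :=
  ∀ B : Finset (Fin v), f B = -1 ∨ f B = 0 ∨ f B = 1

/-- The volume of a trade: the sum of its positive entries. -/
def volume (v : ℕ) (f : Finset (Fin v) → ℤ) : ℤ :=
  ∑ B : Finset (Fin v), max (f B) 0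

/-- A `(2,3,v)`-halving: a simple trade taking value `±1` on every 3-subset. -/
def isHalving (v : ℕ) (f : Finset (Fin v) → ℤ) : Prop :=
  isTrade v f ∧ isSimple v f ∧
    ∀ B : Finset (Fin v), B.card = 3 → f B = 1 ∨ f B = -1

/-- The minimal trade `(a₀ a₁ a₂ ; b₀ b₁ b₂)`: it sends each of the eight sets
`{c₀,c₁,c₂}` with `cᵢ ∈ {aᵢ, bᵢ}` to `(-1)^(#{i : cᵢ = bᵢ})` and all other sets to 0. -/
def minimalTrade (v : ℕ) (a b : Fin 3 → Fin v) : Finset (Fin v) → ℤ :=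
  fun B => ∑ s : Fin 3 → Bool,
    (-1 : ℤ) ^ (Finset.univ.filter (fun i => s i = true)).card *
      (if B = Finset.image (fun i => if s i then b i else a i) Finset.univ then 1 else 0)

/-- The directed-edge trade `E(i,j) = 1_{{aᵢ,bᵢ,aⱼ}} + 1_{{aᵢ,bᵢ,bⱼ}} - 1_{{aⱼ,bⱼ,aᵢ}} - 1_{{aⱼ,bⱼ,bᵢ}}`. -/
def edgeTrade (v : ℕ) {ι : Type*} (a b : ι → Fin v) (i j : ι) : Finset (Fin v) → ℤ :=
  fun B => (if B = {a i, b i, a j} then 1 else 0) + (if B = {a i, b i, b j} then 1 else 0)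
    - (if B = {a j, b j, a i} then 1 else 0) - (if B = {a j, b j, b i} then 1 else 0)

/-!
Shifting the negative half of each `E(t, t+1)` by one step writes the cycle trade as
`Σ_t Σ_{c ∈ {a, b}} (1_{{aₜ, bₜ, c_{t+1}}} - 1_{{aₜ, bₜ, c_{t-1}}})`. These `4ℓ` triples are pairwise
distinct: a triple `{aₛ, bₛ, x}` with `x ∉ {aₛ, bₛ}` determines `s` and `x`, and `t + 1 ≠ t - 1`
because `ℓ ≥ 3`. Hence the trade is simple, with exactly `2ℓ` positive blocks. It is balanced
because `E(i, j)` covers a pair `P` with total weight `2·[P = {aᵢ, bᵢ}] - 2·[P = {aⱼ, bⱼ}]`,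
and these defects telescope around the cycle.
-/

open Finset Function

section Superset

variable {α : Type*} [Fintype α] [DecidableEq α]

lemma sum_superset_ite_eq {T : Finset α} (hT : T.card = 3) (P : Finset α) :
    ∑ B ∈ univ.filter (fun B : Finset α => B.card = 3 ∧ P ⊆ B), (if B = T then (1 : ℤ) else 0) =
      if P ⊆ T then 1 else 0 := by
  simp [sum_ite_eq', hT]

lemma sum_superset_edge_triples {x₁ x₂ y₁ y₂ : α} (h : [x₁, x₂, y₁, y₂].Nodup)
    {P : Finset α} (hP : P.card = 2) :
    ∑ B ∈ univ.filter (fun B : Finset α => B.card = 3 ∧ P ⊆ B),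
      ((if B = {x₁, x₂, y₁} then (1 : ℤ) else 0) + (if B = {x₁, x₂, y₂} then 1 else 0)
        - (if B = {y₁, y₂, x₁} then 1 else 0) - (if B = {y₁, y₂, x₂} then 1 else 0)) =
      2 * (if P = {x₁, x₂} then 1 else 0) - 2 * (if P = {y₁, y₂} then 1 else 0) := by
  obtain ⟨p, q, hpq, rfl⟩ := card_eq_two.mp hP
  simp only [List.nodup_cons, List.mem_cons, List.not_mem_nil, or_false, not_or] at h
  simp only [sum_sub_distrib, sum_add_distrib]
  rw [sum_superset_ite_eq (card_triple_eq_three_iff.2 (by grind)),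
    sum_superset_ite_eq (card_triple_eq_three_iff.2 (by grind)),
    sum_superset_ite_eq (card_triple_eq_three_iff.2 (by grind)),
    sum_superset_ite_eq (card_triple_eq_three_iff.2 (by grind))]
  simp only [insert_subset_iff, singleton_subset_iff, mem_insert, mem_singleton, ← coe_inj,
    coe_pair, Set.pair_eq_pair_iff]
  -- a mixed pair `{xᵢ, yⱼ}` lies in one positive and one negative triple, so only `{x₁, x₂}`
  -- and `{y₁, y₂}` survive
  split_ifs <;> grind

end Superset

section InjectiveSum

variable {κ α β γ : Type*} [Fintype κ] [DecidableEq α] [AddCommMonoid β] [AddCommMonoid γ]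
  {S : κ → α}

lemma sum_ite_apply_eq_of_injective (hS : Injective S) (σ : κ → β) (k : κ) :
    (∑ j, if S k = S j then σ j else 0) = σ k := by
  rw [sum_eq_single k (fun j _ hj => if_neg (hS.ne hj.symm)) (by simp), if_pos rfl]

lemma apply_sum_ite_eq_of_injective (hS : Injective S) (σ : κ → β) {φ : β → γ} (hφ : φ 0 = 0)
    (B : α) : φ (∑ k, if B = S k then σ k else 0) = ∑ k, if B = S k then φ (σ k) else 0 := by
  by_cases hB : ∃ k, B = S k
  · obtain ⟨k, rfl⟩ := hB
    rw [sum_ite_apply_eq_of_injective hS, sum_ite_apply_eq_of_injective hS]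
  · push Not at hB
    simp [hB, hφ]

lemma sum_ite_mem_of_injective (hS : Injective S) {σ : κ → β} {s : Set β} (h0 : 0 ∈ s)
    (hσ : ∀ k, σ k ∈ s) (B : α) : (∑ k, if B = S k then σ k else 0) ∈ s := by
  by_cases hB : ∃ k, B = S k
  · obtain ⟨k, rfl⟩ := hB
    simpa only [sum_ite_apply_eq_of_injective hS] using hσ k
  · push Not at hB
    simpa [hB] using h0

end InjectiveSum

section Triples

variable {ι : Type*} {v : ℕ} {a b : ι → Fin v}

lemma sum_superset_edgeTrade (hab : Injective (Sum.elim a b)) {i j : ι} (hij : i ≠ j)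
    {P : Finset (Fin v)} (hP : P.card = 2) :
    ∑ B ∈ univ.filter (fun B : Finset (Fin v) => B.card = 3 ∧ P ⊆ B), edgeTrade v a b i j B =
      2 * (if P = {a i, b i} then 1 else 0) - 2 * (if P = {a j, b j} then 1 else 0) := by
  obtain ⟨ha, hb, hab⟩ := Sum.elim_injective.mp hab
  refine sum_superset_edge_triples ?_ hP
  simp [ha.eq_iff, hb.eq_iff, hab, (hab _ _).symm, hij]

lemma ite_apply_ne_of_ne (hab : Injective (Sum.elim a b)) {r s : ι} (c : Bool) (h : r ≠ s) :
    (if c then b else a) r ≠ a s ∧ (if c then b else a) r ≠ b s := by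
  obtain ⟨ha, hb, hab⟩ := Sum.elim_injective.mp hab
  cases c <;> simp [ha.ne h, hb.ne h, hab, (hab _ _).symm]

lemma card_triple_of_ne (hab : Injective (Sum.elim a b)) {r s : ι} {c : Bool} (h : r ≠ s) :
    ({a s, b s, (if c then b else a) r} : Finset (Fin v)).card = 3 :=
  card_triple_eq_three_iff.2
    ⟨(Sum.elim_injective.mp hab).2.2 s s, (ite_apply_ne_of_ne hab c h).1.symm,
      (ite_apply_ne_of_ne hab c h).2.symm⟩

lemma triple_eq_triple_iff (hab : Injective (Sum.elim a b)) {s t r r' : ι} {c c' : Bool}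
    (hr : r ≠ s) (hr' : r' ≠ t) :
    ({a s, b s, (if c then b else a) r} : Finset (Fin v)) = {a t, b t, (if c' then b else a) r'} ↔
      s = t ∧ c = c' ∧ r = r' := by
  obtain ⟨ha, hb, hab⟩ := Sum.elim_injective.mp hab
  refine ⟨fun h => ?_, by rintro ⟨rfl, rfl, rfl⟩; rfl⟩
  have ht := h.symm ▸ mem_insert_self (a t) _
  have hbt : b t ∈ ({a s, b s, (if c then b else a) r} : Finset (Fin v)) := h.symm ▸ by simp
  have hc : (if c then b else a) r ∈ ({a t, b t, (if c' then b else a) r'} : Finset (Fin v)) :=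
    h ▸ by simp
  cases c <;> cases c' <;> simp [ha.eq_iff, hb.eq_iff, hab, (hab _ _).symm] at ht hbt hc ⊢ <;> grind

end Triples

section Cycle

variable {ι : Type*} [AddCommGroup ι] {v : ℕ} {a b : ι → Fin v} {o : ι}

lemma ite_add_sub_ne_self (ho : o ≠ 0) (t : ι) (ε : Bool) : (if ε then t + o else t - o) ≠ t := by
  cases ε <;> simp [ho]

/-- `(t, true, c)` is the block `{aₜ, bₜ, cₜ₊ₒ}` and `(t, false, c)` the block `{aₜ, bₜ, cₜ₋ₒ}`,
where `c` selects `b` (`true`) or `a` (`false`). -/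
def cycleBlock (a b : ι → Fin v) (o : ι) (x : ι × Bool × Bool) : Finset (Fin v) :=
  {a x.1, b x.1, (if x.2.2 then b else a) (if x.2.1 then x.1 + o else x.1 - o)}

def cycleSign (x : ι × Bool × Bool) : ℤ := if x.2.1 then 1 else -1

lemma card_cycleBlock (hab : Injective (Sum.elim a b)) (ho : o ≠ 0) (x : ι × Bool × Bool) :
    (cycleBlock a b o x).card = 3 :=
  card_triple_of_ne hab (ite_add_sub_ne_self ho _ _)

lemma cycleBlock_injective (hab : Injective (Sum.elim a b)) (ho : o ≠ 0) (ho2 : o + o ≠ 0) :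
    Injective (cycleBlock a b o) := by
  rintro ⟨t, ε, c⟩ ⟨t', ε', c'⟩ h
  obtain ⟨rfl, rfl, hr⟩ :=
    (triple_eq_triple_iff hab (ite_add_sub_ne_self ho t ε) (ite_add_sub_ne_self ho t' ε')).mp h
  cases ε <;> cases ε' <;> simp only [Bool.false_eq_true, if_true, if_false] at hr ⊢
  · exact (ho2 (by simpa [sub_eq_iff_eq_add, add_assoc] using hr)).elim
  · exact (ho2 (by simpa [sub_eq_iff_eq_add, add_assoc] using hr.symm)).elim

variable [Fintype ι]

def cycleTrade (v : ℕ) (a b : ι → Fin v) (o : ι) : Finset (Fin v) → ℤ :=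
  fun B => ∑ t, edgeTrade v a b t (t + o) B

lemma cycleTrade_eq_sum_cycleBlock (B : Finset (Fin v)) :
    cycleTrade v a b o B = ∑ x, if B = cycleBlock a b o x then cycleSign x else 0 := by
  have shift := Equiv.sum_comp (Equiv.addRight o) fun t =>
    (if B = {a t, b t, a (t - o)} then (-1 : ℤ) else 0) + (if B = {a t, b t, b (t - o)} then -1 else 0)
  simp only [Equiv.coe_addRight, add_sub_cancel_right] at shift
  simp only [cycleTrade, edgeTrade, Fintype.sum_prod_type, Fintype.sum_bool, cycleBlock, cycleSign,
    sub_eq_add_neg, neg_ite, neg_zero, Bool.false_eq_true, if_true, if_false, sum_add_distrib] at shift ⊢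
  linear_combination shift

lemma cycleTrade_eq_zero_of_card_ne (hab : Injective (Sum.elim a b)) (ho : o ≠ 0)
    {B : Finset (Fin v)} (hB : B.card ≠ 3) : cycleTrade v a b o B = 0 := by
  rw [cycleTrade_eq_sum_cycleBlock]
  exact sum_eq_zero fun x _ => if_neg fun h => hB (by rw [h]; exact card_cycleBlock hab ho x)

lemma sum_superset_cycleTrade (hab : Injective (Sum.elim a b)) (ho : o ≠ 0)
    {P : Finset (Fin v)} (hP : P.card = 2) :
    ∑ B ∈ univ.filter (fun B : Finset (Fin v) => B.card = 3 ∧ P ⊆ B), cycleTrade v a b o B = 0 := by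
  have hshift (t : ι) : t ≠ t + o := by simpa [eq_comm] using ho
  simp only [cycleTrade]
  rw [sum_comm]
  simp only [sum_superset_edgeTrade hab (hshift _) hP, sum_sub_distrib]
  have shift := Equiv.sum_comp (Equiv.addRight o) fun t => 2 * if P = {a t, b t} then (1 : ℤ) else 0
  simp only [Equiv.coe_addRight] at shift
  exact sub_eq_zero.mpr shift.symm

theorem isTrade_cycleTrade (hab : Injective (Sum.elim a b)) (ho : o ≠ 0) :
    isTrade v (cycleTrade v a b o) :=
  ⟨fun _ hB => cycleTrade_eq_zero_of_card_ne hab ho hB,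
    fun _ hP => sum_superset_cycleTrade hab ho hP⟩

theorem isSimple_cycleTrade (hab : Injective (Sum.elim a b)) (ho : o ≠ 0) (ho2 : o + o ≠ 0) :
    isSimple v (cycleTrade v a b o) := by
  intro B
  have := sum_ite_mem_of_injective (cycleBlock_injective hab ho ho2) (σ := cycleSign)
    (s := {-1, 0, 1}) (by simp) (fun x => by unfold cycleSign; split_ifs <;> simp) B
  simpa [← cycleTrade_eq_sum_cycleBlock] using this

theorem volume_cycleTrade (hab : Injective (Sum.elim a b)) (ho : o ≠ 0) (ho2 : o + o ≠ 0) :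
    volume v (cycleTrade v a b o) = 2 * Fintype.card ι := by
  have hmax B := apply_sum_ite_eq_of_injective (cycleBlock_injective hab ho ho2) cycleSign
    (φ := fun z : ℤ => max z 0) rfl B
  simp only [volume, cycleTrade_eq_sum_cycleBlock, hmax]
  rw [sum_comm]
  simp [cycleSign, Fintype.sum_prod_type, mul_comm]

end Cycle

/-- For `v ≥ 6`, `ℓ ≥ 3`, and `2ℓ` pairwise distinct points `aₜ, bₜ` of `Fin v`,
the cycle trade `T(C) = Σ_{t ∈ Fin ℓ} E(t, t+1)` (indices mod `ℓ`) is a simple `T(2,3,v)`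
trade of volume `2ℓ`. -/
theorem cycleTrade_is_simple_trade
    (v ℓ : ℕ) (hℓ : 3 ≤ ℓ) (a b : Fin ℓ → Fin v)
    (hab : Function.Injective (Sum.elim a b)) :
    isTrade v (fun B => ∑ t : Fin ℓ, edgeTrade v a b t (t + ⟨1, by omega⟩) B) ∧
    isSimple v (fun B => ∑ t : Fin ℓ, edgeTrade v a b t (t + ⟨1, by omega⟩) B) ∧
    volume v (fun B => ∑ t : Fin ℓ, edgeTrade v a b t (t + ⟨1, by omega⟩) B) = 2 * ℓ := by
  have : NeZero ℓ := ⟨by omega⟩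
  have ho : (⟨1, by omega⟩ : Fin ℓ) ≠ 0 := by simp [Fin.ext_iff]
  have ho2 : (⟨1, by omega⟩ : Fin ℓ) + ⟨1, by omega⟩ ≠ 0 := by
    simp [Fin.ext_iff, Fin.val_add, Nat.mod_eq_of_lt (show 2 < ℓ by omega)]
  exact ⟨isTrade_cycleTrade hab ho, isSimple_cycleTrade hab ho ho2,
    (volume_cycleTrade hab ho ho2).trans (by rw [Fintype.card_fin])⟩
end

section
/- Let n ≥ 1, v = 4n+2, m = 2n+1, and for i ∈ {0,...,2n} set a_i = i and b_i = i + m in Fin v. Then the sum, over all 3-element subsets {α0,α1,α2} of {0,...,2n}, of the minimal trades (a_{α0} a_{α1} a_{α2} ; b_{α0} b_{α1} b_{α2}) is a simple T(2,3,v) trade of volume 4·C(2n+1,3), and its support is exactly the set of 3-element subsets of Fin v whose three elements have pairwise distinct residues modulo m. -/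
/-!
For a pair `P`, the 3-sets of a minimal trade containing `P` are its corners `c ∈ {a,b}³`
containing `P`. Some coordinate `j` is met by neither point of `P`, and switching `c` at `j`
keeps `P` inside the corner while negating its sign, so these contributions cancel; sums of
trades are trades.

With `col x = x mod m`, the columns of a corner of the trade on a triple `α` are exactly `α`,
and in each column the corner tells `a` from `b`. Hence distinct (triple, corner) pairs give
distinct 3-sets: the sum is `±1` on the corners and `0` elsewhere, its support is the set of
3-sets with three distinct columns, and its volume counts the 4 positive corners of each of the
`C(m,3)` triples.
-/

open Finset Function

section MinimalTrade

variable {v : ℕ} (A B : Fin 3 → Fin v)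

def cornerSign (c : Fin 3 → Bool) : ℤ := (-1) ^ #{i | c i = true}

def corner (c : Fin 3 → Bool) : Finset (Fin v) := univ.image fun i => if c i then B i else A i

theorem minimalTrade_apply (T : Finset (Fin v)) :
    minimalTrade v A B T = ∑ c, cornerSign c * if T = corner A B c then 1 else 0 := rfl

theorem cornerSign_update_not :
    ∀ (c : Fin 3 → Bool) (j : Fin 3), cornerSign (update c j !c j) = -cornerSign c := by
  decide

theorem cornerSign_eq_one_or_eq_neg_one : ∀ c, cornerSign c = 1 ∨ cornerSign c = -1 := by
  decide

theorem sum_max_cornerSign_zero : ∑ c, max (cornerSign c) 0 = 4 := by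
  decide

theorem mem_corner_update_iff {x : Fin v} {j : Fin 3} (hA : x ≠ A j) (hB : x ≠ B j)
    (c : Fin 3 → Bool) (t : Bool) : x ∈ corner A B (update c j t) ↔ x ∈ corner A B c := by
  simp only [corner, mem_image, mem_univ, true_and]
  refine exists_congr fun i => ?_
  rcases eq_or_ne i j with rfl | hij
  · constructor <;> rintro rfl <;> split_ifs at hA hB <;> simp_all
  · rw [update_of_ne hij]

variable {A B} (hAB : Injective (Sum.elim A B))
include hAB

theorem card_corner (c : Fin 3 → Bool) : #(corner A B c) = 3 := by
  refine (card_image_of_injective _ fun i j h => ?_).trans (card_fin 3)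
  have := @hAB (if c i then .inr i else .inl i) (if c j then .inr j else .inl j)
    (by split_ifs at h ⊢ <;> exact h)
  split_ifs at this <;> simpa using this

theorem exists_forall_ne_of_card_le_two {P : Finset (Fin v)} (hP : #P ≤ 2) :
    ∃ j, ∀ x ∈ P, x ≠ A j ∧ x ≠ B j := by
  have hits (x : Fin v) : #{j | x = A j ∨ x = B j} ≤ 1 := by
    refine card_le_one.mpr fun i hi j hj => ?_
    simp only [mem_filter, mem_univ, true_and] at hi hj
    rcases hi with rfl | rfl <;> rcases hj with h | h
    · simpa using @hAB (.inl i) (.inl j) h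
    · simpa using @hAB (.inl i) (.inr j) h
    · simpa using @hAB (.inr i) (.inl j) h
    · simpa using @hAB (.inr i) (.inr j) h
  have hlt : #(P.biUnion fun x => {j | x = A j ∨ x = B j}) < #(univ : Finset (Fin 3)) :=
    calc _ ≤ #P * 1 := card_biUnion_le_card_mul _ _ _ fun x _ => hits x
      _ < 3 := by omega
  obtain ⟨j, -, hj⟩ := exists_mem_notMem_of_card_lt_card hlt
  refine ⟨j, fun x hx => ?_⟩
  simp only [mem_biUnion, mem_filter, mem_univ, true_and, not_exists, not_and] at hj
  exact not_or.mp (hj x hx)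

theorem sum_minimalTrade_superset (P : Finset (Fin v)) :
    ∑ T ∈ univ.filter (fun T : Finset (Fin v) => #T = 3 ∧ P ⊆ T), minimalTrade v A B T =
      ∑ c, cornerSign c * if P ⊆ corner A B c then 1 else 0 := by
  simp only [minimalTrade_apply]
  rw [sum_comm]
  refine sum_congr rfl fun c _ => ?_
  rw [← mul_sum, sum_ite_eq']
  simp [card_corner hAB c]

theorem sum_cornerSign_mul_subset_corner_eq_zero {P : Finset (Fin v)} (hP : #P ≤ 2) :
    ∑ c, cornerSign c * (if P ⊆ corner A B c then 1 else 0 : ℤ) = 0 := by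
  obtain ⟨j, hj⟩ := exists_forall_ne_of_card_le_two hAB hP
  let flip : Equiv.Perm (Fin 3 → Bool) :=
    Involutive.toPerm (fun c => update c j !c j) fun c => by simp
  have hflip (c : Fin 3 → Bool) :
      cornerSign (flip c) * (if P ⊆ corner A B (flip c) then 1 else 0)
        = -(cornerSign c * (if P ⊆ corner A B c then 1 else 0 : ℤ)) := by
    have hsub : P ⊆ corner A B (flip c) ↔ P ⊆ corner A B c := by
      simp only [subset_iff]
      exact forall₂_congr fun x hx => mem_corner_update_iff A B (hj x hx).1 (hj x hx).2 c _
    simp only [hsub]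
    rw [show flip c = update c j !c j from rfl, cornerSign_update_not, neg_mul]
  have := Equiv.sum_comp flip fun c => cornerSign c * (if P ⊆ corner A B c then 1 else 0 : ℤ)
  rw [sum_congr rfl fun c _ => hflip c, sum_neg_distrib] at this
  linarith

theorem isTrade_minimalTrade : isTrade v (minimalTrade v A B) := by
  refine ⟨fun T hT => sum_eq_zero fun c _ => ?_, fun P hP => ?_⟩
  · rw [if_neg (by rintro rfl; exact hT (card_corner hAB c)), mul_zero]
  · rw [sum_minimalTrade_superset hAB, sum_cornerSign_mul_subset_corner_eq_zero hAB hP.le]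

end MinimalTrade

theorem isTrade_sum {v : ℕ} {ι : Type*} (s : Finset ι) {f : ι → Finset (Fin v) → ℤ}
    (hf : ∀ i ∈ s, isTrade v (f i)) : isTrade v fun T => ∑ i ∈ s, f i T :=
  ⟨fun T hT => sum_eq_zero fun i hi => (hf i hi).1 T hT,
    fun P hP => by rw [sum_comm]; exact sum_eq_zero fun i hi => (hf i hi).2 P hP⟩

section Columns

variable {v m : ℕ} (a b : Fin m → Fin v) {col : Fin v → Fin m}
  (hcola : ∀ i, col (a i) = i) (hcolb : ∀ i, col (b i) = i)

include hcola hcolb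

theorem col_ite (t : Bool) (i : Fin m) : col (if t then b i else a i) = i := by
  split <;> simp only [hcola, hcolb]

theorem image_col_corner (α : Fin 3 → Fin m) (c : Fin 3 → Bool) :
    (corner (a ∘ α) (b ∘ α) c).image col = univ.image α := by
  rw [corner, image_image]
  exact congrArg (image · univ) (funext fun i => col_ite a b hcola hcolb (c i) (α i))

theorem injOn_col_corner {α : Fin 3 → Fin m} (hα : Injective α) (c : Fin 3 → Bool) :
    Set.InjOn col (corner (a ∘ α) (b ∘ α) c) := by
  simp only [corner, coe_image, coe_univ, Set.image_univ, comp_apply]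
  rintro _ ⟨i, rfl⟩ _ ⟨j, rfl⟩ h
  rw [col_ite a b hcola hcolb, col_ite a b hcola hcolb] at h
  rw [hα h]

variable (hab : ∀ i, a i ≠ b i)
include hab

theorem injective_sumElim : Injective (Sum.elim a b) := by
  rintro (i | i) (j | j) h <;> have hcol := congrArg col h <;>
    simp only [Sum.elim_inl, Sum.elim_inr, hcola, hcolb] at h hcol <;> subst hcol
  · rfl
  · exact absurd h (hab i)
  · exact absurd h.symm (hab i)
  · rfl

theorem injective_sumElim_comp {α : Fin 3 → Fin m} (hα : Injective α) :
    Injective (Sum.elim (a ∘ α) (b ∘ α)) := by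
  rw [← Sum.elim_comp_map]
  exact (injective_sumElim a b hcola hcolb hab).comp (hα.sumMap hα)

theorem right_mem_corner_iff {α : Fin 3 → Fin m} (hα : Injective α) (c : Fin 3 → Bool)
    (i : Fin 3) : b (α i) ∈ corner (a ∘ α) (b ∘ α) c ↔ c i = true := by
  simp only [corner, mem_image, mem_univ, true_and, comp_apply]
  constructor
  · rintro ⟨k, hk⟩
    obtain rfl : k = i := hα (by simpa [col_ite a b hcola hcolb, hcolb] using congrArg col hk)
    by_contra hc
    simp only [hc, if_false] at hk
    exact hab _ hk
  · intro hc
    exact ⟨i, by simp [hc]⟩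

theorem corner_comp_injective {α : Fin 3 → Fin m} (hα : Injective α) :
    Injective (corner (a ∘ α) (b ∘ α)) := fun c c' h => funext fun i => by
  rw [Bool.eq_iff_iff, ← right_mem_corner_iff a b hcola hcolb hab hα, h,
    right_mem_corner_iff a b hcola hcolb hab hα]

end Columns

section Triples

variable {v m : ℕ}

abbrev Triple (m : ℕ) := {s : Finset (Fin m) // s ∈ univ.powersetCard 3}

def tripleEmb (s : Triple m) : Fin 3 ↪o Fin m :=
  s.1.orderEmbOfFin (mem_powersetCard.mp s.2).2

def tripleCorner (a b : Fin m → Fin v) (s : Triple m) (c : Fin 3 → Bool) : Finset (Fin v) :=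
  corner (a ∘ tripleEmb s) (b ∘ tripleEmb s) c

def tripleSum (a b : Fin m → Fin v) (T : Finset (Fin v)) : ℤ :=
  ∑ s ∈ (univ.powersetCard 3).attach, minimalTrade v (a ∘ tripleEmb s) (b ∘ tripleEmb s) T

theorem tripleSum_apply (a b : Fin m → Fin v) (T : Finset (Fin v)) :
    tripleSum a b T =
      ∑ s ∈ (univ.powersetCard 3).attach, ∑ c, cornerSign c *
        if T = tripleCorner a b s c then 1 else 0 :=
  rfl

theorem tripleSum_eq_zero (a b : Fin m → Fin v) {T : Finset (Fin v)}
    (hT : ∀ s c, T ≠ tripleCorner a b s c) : tripleSum a b T = 0 := by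
  rw [tripleSum_apply]
  exact sum_eq_zero fun s _ => sum_eq_zero fun c _ => by rw [if_neg (hT s c), mul_zero]

variable (a b : Fin m → Fin v) {col : Fin v → Fin m}
  (hcola : ∀ i, col (a i) = i) (hcolb : ∀ i, col (b i) = i) (hab : ∀ i, a i ≠ b i)

include hcola hcolb hab

theorem isTrade_tripleSum : isTrade v (tripleSum a b) :=
  isTrade_sum _ fun s _ =>
    isTrade_minimalTrade (injective_sumElim_comp a b hcola hcolb hab (tripleEmb s).injective)

theorem tripleCorner_inj {s s' : Triple m} {c c' : Fin 3 → Bool} :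
    tripleCorner a b s c = tripleCorner a b s' c' ↔ s = s' ∧ c = c' := by
  refine ⟨fun h => ?_, by rintro ⟨rfl, rfl⟩; rfl⟩
  obtain rfl : s = s' := Subtype.ext <| by
    simpa [tripleCorner, image_col_corner a b hcola hcolb, tripleEmb] using congrArg (image col) h
  exact ⟨rfl, corner_comp_injective a b hcola hcolb hab (tripleEmb s).injective h⟩

theorem tripleSum_tripleCorner (s : Triple m) (c : Fin 3 → Bool) :
    tripleSum a b (tripleCorner a b s c) = cornerSign c := by
  simp only [tripleSum_apply, tripleCorner_inj a b hcola hcolb hab]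
  simp [ite_and]

theorem isSimple_tripleSum : isSimple v (tripleSum a b) := by
  intro T
  by_cases hT : ∃ s c, T = tripleCorner a b s c
  · obtain ⟨s, c, rfl⟩ := hT
    rw [tripleSum_tripleCorner a b hcola hcolb hab]
    rcases cornerSign_eq_one_or_eq_neg_one c with h | h <;> simp [h]
  · push Not at hT
    exact Or.inr (Or.inl (tripleSum_eq_zero a b hT))

theorem volume_tripleSum : volume v (tripleSum a b) = 4 * m.choose 3 := by
  let K := (univ.powersetCard 3 : Finset (Finset (Fin m))).attach ×ˢ
    (univ : Finset (Fin 3 → Bool))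
  have hzero : ∀ T ∈ univ, T ∉ K.image (fun p => tripleCorner a b p.1 p.2) →
      max (tripleSum a b T) 0 = 0 := fun T _ hT => by
    rw [tripleSum_eq_zero a b fun s c h => hT (mem_image.mpr ⟨(s, c), by simp [K], h.symm⟩),
      max_self]
  rw [volume, ← sum_subset (subset_univ _) hzero,
    sum_image fun p _ q _ h => Prod.ext_iff.mpr ((tripleCorner_inj a b hcola hcolb hab).mp h),
    sum_product]
  simp only [tripleSum_tripleCorner a b hcola hcolb hab, sum_max_cornerSign_zero, sum_const,
    card_attach, card_powersetCard, card_univ, Fintype.card_fin, nsmul_eq_mul]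
  ring

theorem exists_eq_tripleCorner (hcover : ∀ x, x = a (col x) ∨ x = b (col x))
    {T : Finset (Fin v)} (hT : #T = 3) (hinj : Set.InjOn col T) :
    ∃ s c, T = tripleCorner a b s c := by
  let s : Triple m :=
    ⟨T.image col, mem_powersetCard.mpr ⟨subset_univ _, (card_image_of_injOn hinj).trans hT⟩⟩
  refine ⟨s, fun k => decide (b (tripleEmb s k) ∈ T), (eq_of_subset_of_card_le ?_ ?_).symm⟩
  · simp only [tripleCorner, corner, subset_iff, mem_image, mem_univ, true_and, comp_apply]
    rintro _ ⟨k, rfl⟩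
    obtain ⟨y, hy, hyk⟩ := mem_image.mp (s.1.orderEmbOfFin_mem _ k)
    split_ifs with hbk
    · exact of_decide_eq_true hbk
    · rcases hcover y with h | h <;> rw [hyk] at h
      · exact h ▸ hy
      · exact absurd (h ▸ hy) (of_decide_eq_false (eq_false_of_ne_true hbk))
  · rw [hT, tripleCorner,
      card_corner (injective_sumElim_comp a b hcola hcolb hab (tripleEmb s).injective)]

theorem support_tripleSum (hcover : ∀ x, x = a (col x) ∨ x = b (col x)) :
    {T | tripleSum a b T ≠ 0} = {T | #T = 3 ∧ Set.InjOn col T} := by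
  ext T
  constructor
  · intro hT
    by_contra hT'
    refine hT (tripleSum_eq_zero a b ?_)
    rintro s c rfl
    exact hT' ⟨card_corner (injective_sumElim_comp a b hcola hcolb hab (tripleEmb s).injective) c,
      injOn_col_corner a b hcola hcolb (tripleEmb s).injective c⟩
  · rintro ⟨hT, hinj⟩
    obtain ⟨s, c, rfl⟩ := exists_eq_tripleCorner a b hcola hcolb hab hcover hT hinj
    rcases cornerSign_eq_one_or_eq_neg_one c with h | h <;>
      simp [tripleSum_tripleCorner a b hcola hcolb hab, h]

end Triples

theorem sum_of_minimalTrades_is_simple_trade_general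
    (n : ℕ) (v m : ℕ) (hv : v = 4 * n + 2) (hm : m = 2 * n + 1)
    (a b : Fin m → Fin v)
    (ha : ∀ i : Fin m, (a i : ℕ) = (i : ℕ)) (hb : ∀ i : Fin m, (b i : ℕ) = (i : ℕ) + m)
    (F : Finset (Fin v) → ℤ)
    (hF : F = fun B => ∑ s ∈ ((Finset.univ : Finset (Fin m)).powersetCard 3).attach,
      minimalTrade v
        (fun k => a ((s.1.orderIsoOfFin (Finset.mem_powersetCard.mp s.2).2) k))
        (fun k => b ((s.1.orderIsoOfFin (Finset.mem_powersetCard.mp s.2).2) k)) B) :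
    isTrade v F ∧ isSimple v F ∧ volume v F = 4 * Nat.choose (2 * n + 1) 3 ∧
      {B : Finset (Fin v) | F B ≠ 0} =
        {B : Finset (Fin v) | B.card = 3 ∧
          Set.InjOn (fun x : Fin v => (x : ℕ) % m) ↑B} := by
  obtain rfl : F = tripleSum a b := hF
  subst hm
  let col (x : Fin v) : Fin (2 * n + 1) := Fin.ofNat _ x
  have hcol (x : Fin v) : (col x : ℕ) = x % (2 * n + 1) := Fin.val_ofNat _ _
  have hcola (i : Fin (2 * n + 1)) : col (a i) = i := Fin.ext <| by
    rw [hcol, ha, Nat.mod_eq_of_lt i.2]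
  have hcolb (i : Fin (2 * n + 1)) : col (b i) = i := Fin.ext <| by
    rw [hcol, hb, Nat.add_mod_right, Nat.mod_eq_of_lt i.2]
  have hab (i : Fin (2 * n + 1)) : a i ≠ b i := fun h => by
    have := congrArg Fin.val h
    rw [ha, hb] at this
    omega
  have hcover (x : Fin v) : x = a (col x) ∨ x = b (col x) := by
    rcases lt_or_ge (x : ℕ) (2 * n + 1) with hx | hx
    · exact Or.inl (Fin.ext <| by rw [ha, hcol, Nat.mod_eq_of_lt hx])
    · refine Or.inr (Fin.ext ?_)
      rw [hb, hcol, Nat.mod_eq_sub_mod hx, Nat.mod_eq_of_lt (by omega)]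
      omega
  refine ⟨isTrade_tripleSum a b hcola hcolb hab, isSimple_tripleSum a b hcola hcolb hab,
    volume_tripleSum a b hcola hcolb hab, ?_⟩
  rw [support_tripleSum a b hcola hcolb hab hcover]
  exact Set.ext fun T => and_congr_right fun _ =>
    ⟨Fin.val_injective.comp_injOn, Set.InjOn.of_comp (g := Fin.val) (f := col)⟩

/-- For `n ≥ 1`, `v = 4n+2`, `m = 2n+1`, `aᵢ = i`, `bᵢ = i + m`, the sum of the
minimal trades `(a_{α₀} a_{α₁} a_{α₂} ; b_{α₀} b_{α₁} b_{α₂})` over all 3-subsets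
`{α₀,α₁,α₂}` of `{0,…,2n}` is a simple `T(2,3,v)` trade of volume `4·C(2n+1,3)`, whose
support is exactly the 3-subsets of `Fin v` whose elements have pairwise distinct
residues mod `m`. -/
theorem sum_of_minimalTrades_is_simple_trade
    (n : ℕ) (hn : 1 ≤ n) (v m : ℕ) (hv : v = 4 * n + 2) (hm : m = 2 * n + 1)
    (a b : Fin m → Fin v)
    (ha : ∀ i : Fin m, (a i : ℕ) = (i : ℕ)) (hb : ∀ i : Fin m, (b i : ℕ) = (i : ℕ) + m)
    (F : Finset (Fin v) → ℤ)
    (hF : F = fun B => ∑ s ∈ ((Finset.univ : Finset (Fin m)).powersetCard 3).attach,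
      minimalTrade v
        (fun k => a ((s.1.orderIsoOfFin (Finset.mem_powersetCard.mp s.2).2) k))
        (fun k => b ((s.1.orderIsoOfFin (Finset.mem_powersetCard.mp s.2).2) k)) B) :
    isTrade v F ∧ isSimple v F ∧ volume v F = 4 * Nat.choose (2 * n + 1) 3 ∧
      {B : Finset (Fin v) | F B ≠ 0} =
        {B : Finset (Fin v) | B.card = 3 ∧
          Set.InjOn (fun x : Fin v => (x : ℕ) % m) ↑B} :=
  sum_of_minimalTrades_is_simple_trade_general n v m hv hm a b ha hb F hF
end

section
/- Let v ≥ 6, let m ≥ 3, and let a : Fin m → Fin v, b : Fin m → Fin v be such that the 2m points a_i, b_i are pairwise distinct. Let ε : Fin m → Fin m → ℤ satisfy ε i i = 0, ε i j ∈ {1,-1} and ε j i = -ε i j for all i ≠ j, and Σ_j ε i j = 0 for every i (a balanced orientation of the complete graph K_m, as arises from an Eulerian circuit). Define g : Finset (Fin v) → ℤ by g({a_i, b_i, a_j}) = g({a_i, b_i, b_j}) = ε i j for all i ≠ j, and g B = 0 for every other set B. Then g is a simple T(2,3,v) trade of volume m(m-1), and its support is exactly the set of 3-element subsets of the form {a_i,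 b_i, a_j} or {a_i, b_i, b_j} with i ≠ j. -/
/-!
The support of `g` is indexed injectively by the blocks `{aᵢ, bᵢ, c}` with `i ≠ j` and
`c ∈ {aⱼ, bⱼ}`, so every sum over blocks becomes a sum over `(i, j, c)`. A pair lies in
`{aᵢ, bᵢ, c}` iff it is `{aᵢ, bᵢ}`, `{aᵢ, c}` or `{bᵢ, c}`. The pair `{aᵢ, bᵢ}` collects
`2 ∑ⱼ εᵢⱼ = 0` by balance; a cross pair `{xᵢ, yⱼ}` with `x, y ∈ {a, b}` is counted by a function
symmetric in `i, j` and weighted by the antisymmetric `ε`, so these contributions cancel.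
For the volume, `2 max(εᵢⱼ, 0) = εᵢⱼ + 1` when `εᵢⱼ = ±1`.
-/

open Finset Function

namespace Finset

variable {α : Type*} [DecidableEq α]

theorem subset_triple_iff {x y z : α} {P : Finset α}
    (hP : P.card = 2) (hxy : x ≠ y) (hxz : x ≠ z) (hyz : y ≠ z) :
    P ⊆ {x, y, z} ↔ P = {x, y} ∨ P = {x, z} ∨ P = {y, z} := by
  refine ⟨fun h => ?_, by rintro (rfl | rfl | rfl) <;> simp [insert_subset_iff]⟩
  obtain ⟨p, r, hpr, rfl⟩ := card_eq_two.mp hP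
  have hp := h (mem_insert_self p {r})
  have hr := h (mem_insert_of_mem (mem_singleton_self r))
  simp only [mem_insert, mem_singleton] at hp hr
  rcases hp with rfl | rfl | rfl <;> rcases hr with rfl | rfl | rfl <;>
    simp_all [pair_comm]

theorem ite_subset_triple {R : Type*} [AddMonoid R] {x y z : α} {P : Finset α}
    (hP : P.card = 2) (hxy : x ≠ y) (hxz : x ≠ z) (hyz : y ≠ z) (e : R) :
    (if P ⊆ {x, y, z} then e else 0) =
      (if P = {x, y} then e else 0) + (if P = {x, z} then e else 0) +
        (if P = {y, z} then e else 0) := by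
  have h₁ : ({x, y} : Finset α) ≠ {x, z} :=
    ne_of_mem_of_not_mem' (mem_insert_of_mem (mem_singleton_self y)) (by simp [hxy.symm, hyz])
  have h₂ : ({x, y} : Finset α) ≠ {y, z} :=
    ne_of_mem_of_not_mem' (mem_insert_self x _) (by simp [hxy, hxz])
  have h₃ : ({x, z} : Finset α) ≠ {y, z} :=
    ne_of_mem_of_not_mem' (mem_insert_self x _) (by simp [hxy, hxz])
  rw [if_congr (subset_triple_iff hP hxy hxz hyz) rfl rfl]
  split_ifs <;> simp_all

theorem sum_antisymm_mul_symm {ι R : Type*} [Fintype ι] [NonAssocRing R] [NoZeroDivisors R]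
    [CharZero R] {ε h : ι → ι → R} (hε : ∀ i j, ε j i = -ε i j) (hh : ∀ i j, h j i = h i j) :
    ∑ i, ∑ j, ε i j * h i j = 0 := by
  rw [← CharZero.eq_neg_self_iff]
  calc ∑ i, ∑ j, ε i j * h i j = ∑ i, ∑ j, ε j i * h j i := sum_comm
    _ = -∑ i, ∑ j, ε i j * h i j := by
      simp only [← sum_neg_distrib, ← neg_mul, ← hε, hh]

theorem sum_offDiag_eq_sum {ι M : Type*} [Fintype ι] [AddCommMonoid M]
    {f : ι × ι → M} (hf : ∀ i, f (i, i) = 0) : ∑ p ∈ univ.offDiag, f p = ∑ p, f p :=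
  sum_subset (subset_univ _) fun ⟨i, j⟩ _ hp => by
    obtain rfl : i = j := by simpa using hp
    exact hf i

end Finset

namespace BalancedOrientation

variable {α ι : Type*} {a b : ι → α}

theorem cond_ne_left (hab : Injective (Sum.elim a b)) {i j : ι} (hij : i ≠ j) (s : Bool) :
    cond s (b j) (a j) ≠ a i := by
  obtain ⟨ha, -, hab⟩ := Sum.elim_injective.mp hab
  cases s
  · exact ha.ne hij.symm
  · exact (hab i j).symm

theorem cond_ne_right (hab : Injective (Sum.elim a b)) {i j : ι} (hij : i ≠ j) (s : Bool) :
    cond s (b j) (a j) ≠ b i := by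
  obtain ⟨-, hb, hab⟩ := Sum.elim_injective.mp hab
  cases s
  · exact hab j i
  · exact hb.ne hij.symm

theorem cond_inj (hab : Injective (Sum.elim a b)) {j l : ι} {s t : Bool} :
    cond s (b j) (a j) = cond t (b l) (a l) ↔ j = l ∧ s = t := by
  obtain ⟨ha, hb, hab⟩ := Sum.elim_injective.mp hab
  cases s <;> cases t <;> simp [ha.eq_iff, hb.eq_iff, hab, (hab _ _).symm]

variable [DecidableEq α]

def block (a b : ι → α) (q : (ι × ι) × Bool) : Finset α :=
  {a q.1.1, b q.1.1, cond q.2 (b q.1.2) (a q.1.2)}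

def blockIndex (ι : Type*) [Fintype ι] : Finset ((ι × ι) × Bool) :=
  univ.offDiag ×ˢ univ

@[simp]
theorem mem_blockIndex [Fintype ι] {q : (ι × ι) × Bool} : q ∈ blockIndex ι ↔ q.1.1 ≠ q.1.2 := by
  simp [blockIndex]

theorem card_block (hab : Injective (Sum.elim a b)) {q : (ι × ι) × Bool} (hq : q.1.1 ≠ q.1.2) :
    (block a b q).card = 3 :=
  card_eq_three.mpr ⟨_, _, _, (Sum.elim_injective.mp hab).2.2 _ _,
    (cond_ne_left hab hq _).symm, (cond_ne_right hab hq _).symm, rfl⟩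

-- `i` is recovered as the only index with both `aᵢ` and `bᵢ` in the block, then `c` as the rest.
theorem block_injOn (hab : Injective (Sum.elim a b)) :
    Set.InjOn (block a b) {q | q.1.1 ≠ q.1.2} := by
  obtain ⟨ha, hb, hab'⟩ := Sum.elim_injective.mp hab
  rintro ⟨⟨i, j⟩, s⟩ (hij : i ≠ j) ⟨⟨k, l⟩, t⟩ - h
  have mem : ∀ x, x ∈ block a b ((i, j), s) → x = a k ∨ x = b k ∨ x = cond t (b l) (a l) := by
    intro x hx
    rw [h] at hx
    simpa [block] using hx
  obtain rfl : i = k := by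
    by_contra hik
    have hai := mem (a i) (by simp [block])
    have hbi := mem (b i) (by simp [block])
    simp only [ha.eq_iff, hik, hab', false_or] at hai
    simp only [(hab' _ _).symm, hb.eq_iff, hik, false_or] at hbi
    exact hab' i i (hai.trans hbi.symm)
  have hc := mem (cond s (b j) (a j)) (by simp [block])
  simp only [cond_ne_left hab hij, cond_ne_right hab hij, false_or] at hc
  obtain ⟨rfl, rfl⟩ := (cond_inj hab).mp hc
  rfl

theorem mem_image_block_iff [Fintype ι] {B : Finset α} :
    B ∈ (blockIndex ι).image (block a b) ↔
      ∃ i j, i ≠ j ∧ (B = {a i, b i, a j} ∨ B = {a i, b i, b j}) := by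
  simp [blockIndex, block, Bool.exists_bool, eq_comm (b := B)]

theorem sum_eq_sum_block {M : Type*} [Fintype α] [Fintype ι] [AddCommMonoid M]
    (hab : Injective (Sum.elim a b)) {F : Finset α → M}
    (hF : ∀ B, (¬ ∃ i j, i ≠ j ∧ (B = {a i, b i, a j} ∨ B = {a i, b i, b j})) → F B = 0) :
    ∑ B, F B = ∑ q ∈ blockIndex ι, F (block a b q) := by
  rw [← sum_image fun q hq r hr => block_injOn hab (mem_blockIndex.mp hq) (mem_blockIndex.mp hr)]
  exact (sum_subset (subset_univ _) fun B _ hB => hF B (mt mem_image_block_iff.mpr hB)).symm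

variable [Fintype ι] {ε : ι → ι → ℤ}

theorem sum_ite_subset_block_eq_zero (hab : Injective (Sum.elim a b))
    (hanti : ∀ i j, ε j i = -ε i j) (hbal : ∀ i, ∑ j, ε i j = 0) {P : Finset α}
    (hP : P.card = 2) :
    ∑ q ∈ blockIndex ι, (if P ⊆ block a b q then ε q.1.1 q.1.2 else 0) = 0 := by
  set h : ι → ι → ℤ := fun i j =>
    ∑ t : Bool, ∑ s : Bool, if P = {cond t (b i) (a i), cond s (b j) (a j)} then 1 else 0
  have h_symm : ∀ i j, h j i = h i j := fun i j => by
    simp only [h]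
    rw [sum_comm]
    simp only [pair_comm]
  have split : ∀ p ∈ univ.offDiag, ∑ s, (if P ⊆ block a b (p, s) then ε p.1 p.2 else 0) =
      ε p.1 p.2 * (2 * (if P = {a p.1, b p.1} then 1 else 0) + h p.1 p.2) := by
    rintro ⟨i, j⟩ hij
    replace hij : i ≠ j := (mem_offDiag.mp hij).2.2
    -- `delta` also unfolds `block` inside the decidability instance of `P ⊆ block a b _`
    delta block
    dsimp only
    simp only [← mul_boole _ (ε i j), ← mul_sum]
    congr 1
    simp only [ite_subset_triple hP ((Sum.elim_injective.mp hab).2.2 i i)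
      (cond_ne_left hab hij _).symm (cond_ne_right hab hij _).symm, sum_add_distrib, h,
      Fintype.sum_bool, cond_true, cond_false]
    ring
  have hdiag : ∀ i, ε i i = 0 := fun i => CharZero.eq_neg_self_iff.mp (hanti i i)
  rw [blockIndex, sum_product, sum_congr rfl split, sum_offDiag_eq_sum (by simp [hdiag]),
    ← univ_product_univ, sum_product]
  simp only [mul_add, sum_add_distrib, sum_antisymm_mul_symm hanti h_symm, add_zero]
  simp [← sum_mul, hbal]

theorem sum_blockIndex_max_zero_eq (hpm : ∀ i j, i ≠ j → ε i j = 1 ∨ ε i j = -1)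
    (hanti : ∀ i j, ε j i = -ε i j) (hbal : ∀ i, ∑ j, ε i j = 0) :
    ∑ q ∈ blockIndex ι, max (ε q.1.1 q.1.2) 0 = Fintype.card ι * (Fintype.card ι - 1) := by
  have hdouble : ∀ p ∈ (univ.offDiag : Finset (ι × ι)),
      ∑ _s : Bool, max (ε p.1 p.2) 0 = ε p.1 p.2 + 1 := by
    rintro ⟨i, j⟩ hij
    rcases hpm i j (mem_offDiag.mp hij).2.2 with h | h <;> simp [h]
  have hdiag : ∀ i, ε i i = 0 := fun i => CharZero.eq_neg_self_iff.mp (hanti i i)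
  rw [blockIndex, sum_product, sum_congr rfl hdouble, sum_add_distrib,
    sum_offDiag_eq_sum (by simp [hdiag]), ← univ_product_univ, sum_product]
  simp only [hbal, sum_const_zero, zero_add, sum_const, offDiag_card, card_univ, nsmul_one]
  rw [Nat.cast_sub (Nat.le_mul_self _)]
  push_cast
  ring

end BalancedOrientation

open BalancedOrientation

theorem balanced_orientation_trade_general
    (v m : ℕ) (a b : Fin m → Fin v)
    (hab : Function.Injective (Sum.elim a b))
    (ε : Fin m → Fin m → ℤ)
    (hε1 : ∀ i j, i ≠ j → ε i j = 1 ∨ ε i j = -1)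
    (hεanti : ∀ i j, ε j i = -ε i j)
    (hεbal : ∀ i, ∑ j : Fin m, ε i j = 0)
    (g : Finset (Fin v) → ℤ)
    (hg1 : ∀ i j : Fin m, i ≠ j → g {a i, b i, a j} = ε i j ∧ g {a i, b i, b j} = ε i j)
    (hg2 : ∀ B : Finset (Fin v),
      (¬ ∃ i j : Fin m, i ≠ j ∧ (B = {a i, b i, a j} ∨ B = {a i, b i, b j})) → g B = 0) :
    isTrade v g ∧ isSimple v g ∧ volume v g = m * (m - 1) ∧
      {B : Finset (Fin v) | g B ≠ 0} =
        {B : Finset (Fin v) |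
          ∃ i j : Fin m, i ≠ j ∧ (B = {a i, b i, a j} ∨ B = {a i, b i, b j})} := by
  have g_block : ∀ q ∈ blockIndex (Fin m), g (block a b q) = ε q.1.1 q.1.2 := by
    rintro ⟨⟨i, j⟩, _ | _⟩ hq
    exacts [(hg1 i j (mem_blockIndex.mp hq)).1, (hg1 i j (mem_blockIndex.mp hq)).2]
  have g_block_pm : ∀ q ∈ blockIndex (Fin m), g (block a b q) = 1 ∨ g (block a b q) = -1 :=
    fun q hq => g_block q hq ▸ hε1 _ _ (mem_blockIndex.mp hq)
  have reindex : ∀ F : Finset (Fin v) → ℤ, (∀ B, g B = 0 → F B = 0) →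
      ∑ B, F B = ∑ q ∈ blockIndex (Fin m), F (block a b q) :=
    fun F hF => sum_eq_sum_block hab fun B hB => hF B (hg2 B hB)
  have support : ∀ B, g B ≠ 0 ↔ B ∈ (blockIndex (Fin m)).image (block a b) := by
    refine fun B => ⟨fun hB => mem_image_block_iff.mpr (not_imp_comm.mp (hg2 B) hB), fun hB => ?_⟩
    obtain ⟨q, hq, rfl⟩ := mem_image.mp hB
    rcases g_block_pm q hq with h | h <;> simp [h]
  refine ⟨⟨fun B hB => ?_, fun P hP => ?_⟩, fun B => ?_, ?_,
    Set.ext fun B => (support B).trans mem_image_block_iff⟩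
  · by_contra hgB
    obtain ⟨q, hq, rfl⟩ := mem_image.mp ((support B).mp hgB)
    exact hB (card_block hab (mem_blockIndex.mp hq))
  · rw [sum_filter, reindex _ fun B hB => by simp [hB]]
    refine (sum_congr rfl fun q hq => ?_).trans (sum_ite_subset_block_eq_zero hab hεanti hεbal hP)
    simp [card_block hab (mem_blockIndex.mp hq), g_block q hq]
  · by_cases hgB : g B = 0
    · exact .inr (.inl hgB)
    · obtain ⟨q, hq, rfl⟩ := mem_image.mp ((support B).mp hgB)
      rcases g_block_pm q hq with h | h <;> simp [h]
  · rw [volume, reindex _ fun B hB => by simp [hB], sum_congr rfl fun q hq => by rw [g_block q hq],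
      sum_blockIndex_max_zero_eq hε1 hεanti hεbal, Fintype.card_fin]

/-- For `v ≥ 6`, `m ≥ 3`, `2m` pairwise distinct points `aᵢ, bᵢ`, and a balanced
orientation `ε` of the complete graph `K_m`, the function `g` with
`g({aᵢ,bᵢ,aⱼ}) = g({aᵢ,bᵢ,bⱼ}) = ε i j` for `i ≠ j` and `g B = 0` otherwise is a simple
`T(2,3,v)` trade of volume `m(m-1)`, with support exactly the sets of the form
`{aᵢ,bᵢ,aⱼ}` or `{aᵢ,bᵢ,bⱼ}` with `i ≠ j`. -/
theorem balanced_orientation_trade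
    (v m : ℕ) (hv : 6 ≤ v) (hm : 3 ≤ m) (a b : Fin m → Fin v)
    (hab : Function.Injective (Sum.elim a b))
    (ε : Fin m → Fin m → ℤ)
    (hε0 : ∀ i, ε i i = 0)
    (hε1 : ∀ i j, i ≠ j → ε i j = 1 ∨ ε i j = -1)
    (hεanti : ∀ i j, ε j i = -ε i j)
    (hεbal : ∀ i, ∑ j : Fin m, ε i j = 0)
    (g : Finset (Fin v) → ℤ)
    (hg1 : ∀ i j : Fin m, i ≠ j → g {a i, b i, a j} = ε i j ∧ g {a i, b i, b j} = ε i j)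
    (hg2 : ∀ B : Finset (Fin v),
      (¬ ∃ i j : Fin m, i ≠ j ∧ (B = {a i, b i, a j} ∨ B = {a i, b i, b j})) → g B = 0) :
    isTrade v g ∧ isSimple v g ∧ volume v g = m * (m - 1) ∧
      {B : Finset (Fin v) | g B ≠ 0} =
        {B : Finset (Fin v) |
          ∃ i j : Fin m, i ≠ j ∧ (B = {a i, b i, a j} ∨ B = {a i, b i, b j})} :=
  balanced_orientation_trade_general v m a b hab ε hε1 hεanti hεbal g hg1 hg2
end

section
/- Let n ≥ 1, v = 4n+2, m = 2n+1, and for i ∈ {0,...,2n} set a_i = i and b_i = i + m in Fin v. Let ε : Fin m → Fin m → ℤ satisfy ε i i = 0, ε i j ∈ {1,-1} and ε j i = -ε i j for all i ≠ j, and Σ_j ε i j = 0 for every i (such ε encodes an Eulerian circuit of the complete graph on m vertices, which exists since m is odd). Define h : Finset (Fin v) → ℤ as follows: if B is a 3-element subset whose elements have pairwise distinct residues modulo m, then h B = (-1)^(number of elements of B that are ≥ m); if B = {a_i, b_i, a_j} or B = {a_i, b_i, b_j} with i ≠ j, then h B = ε i j; and h B = 0 for all other sets B. Then h is a (2,3,4n+2)-halving.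 -/
open Finset

variable {α ι : Type*}

theorem Finset.insert_pair_eq_triple [DecidableEq α] (x y z : α) :
    insert z {x, y} = ({x, y, z} : Finset α) := by
  rw [insert_comm, pair_comm z]

theorem Finset.sum_filter_card_succ_superset [DecidableEq α] [Fintype α] {M : Type*}
    [AddCommMonoid M] (f : Finset α → M) {P : Finset α} (hP : f P = 0) :
    ∑ B ∈ univ.filter (fun B => #B = #P + 1 ∧ P ⊆ B), f B = ∑ z, f (insert z P) := by
  have himage : univ.filter (fun B => #B = #P + 1 ∧ P ⊆ B) = Pᶜ.image (insert · P) := by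
    ext B
    simp only [mem_filter, mem_univ, true_and, mem_image, mem_compl, exists_eq_insert_iff]
    tauto
  rw [himage, sum_image fun z hz z' _ h => (insert_inj (mem_compl.1 hz)).1 h,
    ← sum_compl_add_sum P, sum_eq_zero (s := P) fun z hz => by rw [insert_eq_of_mem hz, hP],
    add_zero]

structure IsPairing (a b : ι → α) (r : α → ι) : Prop where
  index_a : ∀ i, r (a i) = i
  index_b : ∀ i, r (b i) = i
  a_ne_b : ∀ i, a i ≠ b i
  eq_a_or_eq_b : ∀ x, x = a (r x) ∨ x = b (r x)

namespace IsPairing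

variable {a b : ι → α} {r : α → ι}

theorem a_injective (hP : IsPairing a b r) : Function.Injective a :=
  Function.LeftInverse.injective hP.index_a

theorem apply_a_ne_apply_b (hP : IsPairing a b r) (i j : ι) : a i ≠ b j := by
  intro h
  obtain rfl : i = j := by simpa only [hP.index_a, hP.index_b] using congrArg r h
  exact hP.a_ne_b i h

theorem card_triple_a [DecidableEq α] (hP : IsPairing a b r) {i j : ι} (hij : i ≠ j) :
    #({a i, b i, a j} : Finset α) = 3 :=
  card_eq_three.2 ⟨_, _, _, hP.a_ne_b i, hP.a_injective.ne hij,
    (hP.apply_a_ne_apply_b j i).symm, rfl⟩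

theorem card_triple_b [DecidableEq α] (hP : IsPairing a b r) {i j : ι} (hij : i ≠ j) :
    #({a i, b i, b j} : Finset α) = 3 :=
  card_eq_three.2 ⟨_, _, _, hP.a_ne_b i, hP.apply_a_ne_apply_b i j,
    (Function.LeftInverse.injective hP.index_b).ne hij, rfl⟩

theorem pair_eq_of_index_eq [DecidableEq α] (hP : IsPairing a b r) {x y : α} (hxy : x ≠ y)
    (hr : r x = r y) :
    ({x, y} : Finset α) = {a (r x), b (r x)} := by
  have hx := hP.eq_a_or_eq_b x
  have hy := hP.eq_a_or_eq_b y
  rw [← hr] at hy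
  generalize r x = i at hx hy ⊢
  rcases hx with rfl | rfl <;> rcases hy with rfl | rfl
  · exact absurd rfl hxy
  · rfl
  · exact pair_comm _ _
  · exact absurd rfl hxy

def equivProdBool [DecidableEq α] (hP : IsPairing a b r) : ι × Bool ≃ α where
  toFun p := bif p.2 then a p.1 else b p.1
  invFun x := (r x, decide (x = a (r x)))
  left_inv := by
    rintro ⟨i, _ | _⟩ <;> simp [hP.index_a, hP.index_b, (hP.a_ne_b i).symm]
  right_inv x := by
    rcases hP.eq_a_or_eq_b x with h | h
    · simp [← h]
    · have : x ≠ a (r x) := fun h' => hP.a_ne_b _ (h'.symm.trans h)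
      simp [this, ← h]

theorem sum_univ_eq [DecidableEq α] [Fintype α] [Fintype ι] {M : Type*} [AddCommMonoid M]
    (hP : IsPairing a b r) (g : α → M) : ∑ x, g x = ∑ i, (g (a i) + g (b i)) := by
  rw [← hP.equivProdBool.sum_comp, Fintype.sum_prod_type]
  simp [equivProdBool]

theorem exists_eq_triple_of_not_injOn [DecidableEq α] (hP : IsPairing a b r) {B : Finset α}
    (hB : #B = 3) (hnot : ¬ Set.InjOn r B) :
    ∃ i j, i ≠ j ∧ (B = {a i, b i, a j} ∨ B = {a i, b i, b j}) := by
  obtain ⟨x, hx, y, hy, hr, hxy⟩ : ∃ x ∈ B, ∃ y ∈ B, r x = r y ∧ x ≠ y := by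
    simpa [Set.InjOn] using hnot
  have hsub : {a (r x), b (r x)} ⊆ B :=
    hP.pair_eq_of_index_eq hxy hr ▸ insert_subset hx (singleton_subset_iff.2 hy)
  obtain ⟨z, hz, rfl⟩ := exists_eq_insert_iff.2 ⟨hsub, by rw [card_pair (hP.a_ne_b _), hB]⟩
  rw [insert_pair_eq_triple]
  have hzx : r z ≠ r x := fun h => hz <| by
    rcases hP.eq_a_or_eq_b z with e | e <;> rw [e, h] <;> simp
  refine ⟨r x, r z, hzx.symm, ?_⟩
  rcases hP.eq_a_or_eq_b z with e | e
  · exact .inl (by rw [← e])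
  · exact .inr (by rw [← e])

end IsPairing

structure IsPartitionFunction [DecidableEq α] (a b : ι → α) (r : α → ι) (p : α → Prop)
    [DecidablePred p] (ε : ι → ι → ℤ) (f : Finset α → ℤ) : Prop where
  apply_of_injOn : ∀ B : Finset α, #B = 3 → Set.InjOn r B → f B = (-1) ^ #(B.filter p)
  apply_triple_a : ∀ i j, i ≠ j → f {a i, b i, a j} = ε i j
  apply_triple_b : ∀ i j, i ≠ j → f {a i, b i, b j} = ε i j
  apply_eq_zero : ∀ B : Finset α, ¬ (#B = 3 ∧ Set.InjOn r B) →
    (¬ ∃ i j, i ≠ j ∧ (B = {a i, b i, a j} ∨ B = {a i, b i, b j})) → f B = 0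

namespace IsPartitionFunction

variable [DecidableEq α] {a b : ι → α} {r : α → ι} {p : α → Prop} [DecidablePred p]
  {ε : ι → ι → ℤ} {f : Finset α → ℤ}

theorem apply_eq_zero_of_card_ne_three (hP : IsPairing a b r)
    (hf : IsPartitionFunction a b r p ε f) {B : Finset α} (hB : #B ≠ 3) : f B = 0 :=
  hf.apply_eq_zero B (fun h => hB h.1) <| by
    rintro ⟨i, j, hij, rfl | rfl⟩
    exacts [hB (hP.card_triple_a hij), hB (hP.card_triple_b hij)]

theorem apply_eq_one_or_neg_one (hP : IsPairing a b r)
    (hε : ∀ i j, i ≠ j → ε i j = 1 ∨ ε i j = -1) (hf : IsPartitionFunction a b r p ε f)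
    {B : Finset α} (hB : #B = 3) : f B = 1 ∨ f B = -1 := by
  by_cases hinj : Set.InjOn r B
  · rw [hf.apply_of_injOn B hB hinj]
    exact neg_one_pow_eq_or ℤ _
  · obtain ⟨i, j, hij, rfl | rfl⟩ := hP.exists_eq_triple_of_not_injOn hB hinj
    · rw [hf.apply_triple_a i j hij]
      exact hε i j hij
    · rw [hf.apply_triple_b i j hij]
      exact hε i j hij

theorem apply_insert_a_add_apply_insert_b_eq_zero (hP : IsPairing a b r)
    (hpa : ∀ i, ¬ p (a i)) (hpb : ∀ i, p (b i)) (hf : IsPartitionFunction a b r p ε f)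
    {S : Finset α} (hS : #S = 2) (hinj : Set.InjOn r S) {k : ι} (hk : k ∉ r '' S) :
    f (insert (a k) S) + f (insert (b k) S) = 0 := by
  have hnotMem : ∀ x, r x = k → x ∉ S := fun x hx hxS => hk ⟨x, hxS, hx⟩
  have hinsert : ∀ x, r x = k → #(insert x S) = 3 ∧ Set.InjOn r ↑(insert x S) := fun x hx =>
    ⟨by rw [card_insert_of_notMem (hnotMem x hx), hS],
      by rw [coe_insert, Set.injOn_insert (hnotMem x hx)]; exact ⟨hinj, hx ▸ hk⟩⟩
  obtain ⟨hca, hia⟩ := hinsert _ (hP.index_a k)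
  obtain ⟨hcb, hib⟩ := hinsert _ (hP.index_b k)
  rw [hf.apply_of_injOn _ hca hia, hf.apply_of_injOn _ hcb hib, filter_insert, filter_insert,
    if_neg (hpa k), if_pos (hpb k),
    card_insert_of_notMem fun h => hnotMem _ (hP.index_b k) (mem_filter.1 h).1, pow_succ]
  ring

theorem apply_insert_a_add_apply_insert_b_eq_of_ne (hP : IsPairing a b r)
    (hf : IsPartitionFunction a b r p ε f) {i j : ι} (hij : i ≠ j) {x y : α}
    (hx : x = a i ∨ x = b i) (hy : y = a j ∨ y = b j) :
    f (insert (a i) {x, y}) + f (insert (b i) {x, y}) = ε i j := by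
  have hry : r y = j := by
    rcases hy with rfl | rfl
    exacts [hP.index_a j, hP.index_b j]
  have hpair : ∀ z, r z = i → f {z, y} = 0 := fun z hz =>
    hf.apply_eq_zero_of_card_ne_three hP <| by
      rw [card_pair fun h => hij (by rw [← hz, ← hry, h])]
      omega
  have hedge : f {a i, b i, y} = ε i j := by
    rcases hy with rfl | rfl
    exacts [hf.apply_triple_a i j hij, hf.apply_triple_b i j hij]
  rcases hx with rfl | rfl
  · rw [insert_eq_of_mem (mem_insert_self _ _), hpair _ (hP.index_a i), zero_add, insert_comm,
      hedge]
  · rw [insert_eq_of_mem (mem_insert_self _ _), hpair _ (hP.index_b i), add_zero, hedge]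

variable [Fintype α] [Fintype ι]

theorem sum_apply_insert_pair_eq_zero (hP : IsPairing a b r) (hε0 : ∀ i, ε i i = 0)
    (hεsum : ∀ i, ∑ j, ε i j = 0) (hf : IsPartitionFunction a b r p ε f) (i : ι) :
    ∑ z, f (insert z {a i, b i}) = 0 := by
  have hterm : ∀ k, f (insert (a k) {a i, b i}) + f (insert (b k) {a i, b i}) = 2 * ε i k := by
    intro k
    by_cases hki : k = i
    · subst hki
      rw [insert_eq_of_mem (mem_insert_self _ _),
        insert_eq_of_mem (mem_insert_of_mem (mem_singleton_self _)),
        hf.apply_eq_zero_of_card_ne_three hP (by rw [card_pair (hP.a_ne_b k)]; omega), hε0]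
      ring
    · rw [insert_pair_eq_triple _ _ (a k), insert_pair_eq_triple _ _ (b k),
        hf.apply_triple_a i k (Ne.symm hki), hf.apply_triple_b i k (Ne.symm hki)]
      ring
  rw [hP.sum_univ_eq, sum_congr rfl fun k _ => hterm k, ← mul_sum, hεsum, mul_zero]

theorem sum_apply_insert_pair_eq_zero_of_index_ne (hP : IsPairing a b r)
    (hpa : ∀ i, ¬ p (a i)) (hpb : ∀ i, p (b i)) (hεanti : ∀ i j, ε j i = -ε i j)
    (hf : IsPartitionFunction a b r p ε f) {x y : α} (hxy : r x ≠ r y) :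
    ∑ z, f (insert z {x, y}) = 0 := by
  have hS : #({x, y} : Finset α) = 2 := card_pair fun h => hxy (congrArg r h)
  have hinj : Set.InjOn r ↑({x, y} : Finset α) := by simp [hxy]
  rw [hP.sum_univ_eq, Fintype.sum_eq_add _ _ hxy,
    hf.apply_insert_a_add_apply_insert_b_eq_of_ne hP hxy (hP.eq_a_or_eq_b x)
      (hP.eq_a_or_eq_b y), pair_comm x y,
    hf.apply_insert_a_add_apply_insert_b_eq_of_ne hP hxy.symm (hP.eq_a_or_eq_b y)
      (hP.eq_a_or_eq_b x), hεanti, neg_add_cancel]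
  intro k hk
  refine hf.apply_insert_a_add_apply_insert_b_eq_zero hP hpa hpb hS hinj ?_
  simpa [Set.image_pair, eq_comm] using hk

theorem sum_apply_insert_eq_zero (hP : IsPairing a b r)
    (hpa : ∀ i, ¬ p (a i)) (hpb : ∀ i, p (b i)) (hε0 : ∀ i, ε i i = 0)
    (hεanti : ∀ i j, ε j i = -ε i j) (hεsum : ∀ i, ∑ j, ε i j = 0)
    (hf : IsPartitionFunction a b r p ε f) {P : Finset α} (hP2 : #P = 2) :
    ∑ z, f (insert z P) = 0 := by
  obtain ⟨x, y, hxy, rfl⟩ := card_eq_two.1 hP2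
  by_cases hr : r x = r y
  · rw [hP.pair_eq_of_index_eq hxy hr]
    exact hf.sum_apply_insert_pair_eq_zero hP hε0 hεsum _
  · exact hf.sum_apply_insert_pair_eq_zero_of_index_ne hP hpa hpb hεanti hr

end IsPartitionFunction

theorem IsPartitionFunction.isHalving {v : ℕ} [Fintype ι] {a b : ι → Fin v} {r : Fin v → ι}
    {p : Fin v → Prop} [DecidablePred p] {ε : ι → ι → ℤ} {f : Finset (Fin v) → ℤ}
    (hP : IsPairing a b r) (hpa : ∀ i, ¬ p (a i)) (hpb : ∀ i, p (b i))
    (hε0 : ∀ i, ε i i = 0) (hε1 : ∀ i j, i ≠ j → ε i j = 1 ∨ ε i j = -1)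
    (hεanti : ∀ i j, ε j i = -ε i j) (hεsum : ∀ i, ∑ j, ε i j = 0)
    (hf : IsPartitionFunction a b r p ε f) : isHalving v f := by
  have hzero : ∀ B : Finset (Fin v), #B ≠ 3 → f B = 0 := fun B =>
    hf.apply_eq_zero_of_card_ne_three hP
  refine ⟨⟨hzero, fun P hP2 => ?_⟩, fun B => ?_, fun B => hf.apply_eq_one_or_neg_one hP hε1⟩
  · have hP3 : (3 : ℕ) = #P + 1 := by omega
    simp only [hP3]
    rw [sum_filter_card_succ_superset f (hzero P (by omega))]
    exact hf.sum_apply_insert_eq_zero hP hpa hpb hε0 hεanti hεsum hP2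
  · by_cases hB : #B = 3
    · rcases hf.apply_eq_one_or_neg_one hP hε1 hB with h | h <;> simp [h]
    · simp [hzero B hB]

theorem isPairing_mod {m v : ℕ} (hm : 0 < m) (hv : v = 2 * m) {a b : Fin m → Fin v}
    (ha : ∀ i : Fin m, (a i : ℕ) = i) (hb : ∀ i : Fin m, (b i : ℕ) = i + m) :
    IsPairing a b (fun x => ⟨x % m, Nat.mod_lt _ hm⟩) where
  index_a i := Fin.ext <| by simp [ha, Nat.mod_eq_of_lt i.isLt]
  index_b i := Fin.ext <| by simp [hb, Nat.mod_eq_of_lt i.isLt]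
  a_ne_b i h := by
    have := congrArg Fin.val h
    rw [ha, hb] at this
    omega
  eq_a_or_eq_b x := by
    by_cases hx : (x : ℕ) < m
    · exact .inl <| Fin.ext <| by simp [ha, Nat.mod_eq_of_lt hx]
    · have hxm : (x : ℕ) % m = x - m := by
        rw [Nat.mod_eq_sub_mod (by omega), Nat.mod_eq_of_lt (by omega)]
      exact .inr <| Fin.ext <| by simp only [hb, hxm]; omega

theorem partition_method_halving_general
    (n : ℕ) (v m : ℕ) (hv : v = 4 * n + 2) (hm : m = 2 * n + 1)
    (a b : Fin m → Fin v)
    (ha : ∀ i : Fin m, (a i : ℕ) = (i : ℕ)) (hb : ∀ i : Fin m, (b i : ℕ) = (i : ℕ) + m)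
    (ε : Fin m → Fin m → ℤ)
    (hε0 : ∀ i, ε i i = 0)
    (hε1 : ∀ i j, i ≠ j → ε i j = 1 ∨ ε i j = -1)
    (hεanti : ∀ i j, ε j i = -ε i j)
    (hεbal : ∀ i, ∑ j : Fin m, ε i j = 0)
    (h : Finset (Fin v) → ℤ)
    (h1 : ∀ B : Finset (Fin v), B.card = 3 →
      Set.InjOn (fun x : Fin v => (x : ℕ) % m) ↑B →
      h B = (-1) ^ (B.filter (fun x : Fin v => m ≤ (x : ℕ))).card)
    (h2 : ∀ i j : Fin m, i ≠ j → h {a i, b i, a j} = ε i j ∧ h {a i, b i, b j} = ε i j)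
    (h3 : ∀ B : Finset (Fin v),
      ¬ (B.card = 3 ∧ Set.InjOn (fun x : Fin v => (x : ℕ) % m) ↑B) →
      (¬ ∃ i j : Fin m, i ≠ j ∧ (B = {a i, b i, a j} ∨ B = {a i, b i, b j})) →
      h B = 0) :
    isHalving v h := by
  have hm0 : 0 < m := by omega
  let r : Fin v → Fin m := fun x => ⟨x % m, Nat.mod_lt _ hm0⟩
  have hinj (B : Finset (Fin v)) :
      Set.InjOn r B ↔ Set.InjOn (fun x : Fin v => (x : ℕ) % m) B :=
    ⟨Fin.val_injective.comp_injOn, fun h => Set.InjOn.of_comp (g := Fin.val) h⟩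
  exact IsPartitionFunction.isHalving (r := r) (p := fun x : Fin v => m ≤ (x : ℕ))
    (isPairing_mod hm0 (by omega) ha hb) (fun i => by simp [ha]) (fun i => by simp [hb])
    hε0 hε1 hεanti hεbal
    ⟨fun B hB hBinj => h1 B hB ((hinj B).1 hBinj), fun i j hij => (h2 i j hij).1,
      fun i j hij => (h2 i j hij).2, fun B hB => h3 B (by rwa [hinj] at hB)⟩

/-- For `n ≥ 1`, `v = 4n+2`, `m = 2n+1`, `aᵢ = i`, `bᵢ = i + m`, and a balanced
orientation `ε` of `K_m`, the function `h` equal to `(-1)^(#{x ∈ B : x ≥ m})` on 3-subsets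
with pairwise distinct residues mod `m`, to `ε i j` on `{aᵢ,bᵢ,aⱼ}` and `{aᵢ,bᵢ,bⱼ}` for
`i ≠ j`, and to 0 elsewhere, is a `(2,3,4n+2)`-halving. -/
theorem partition_method_halving
    (n : ℕ) (hn : 1 ≤ n) (v m : ℕ) (hv : v = 4 * n + 2) (hm : m = 2 * n + 1)
    (a b : Fin m → Fin v)
    (ha : ∀ i : Fin m, (a i : ℕ) = (i : ℕ)) (hb : ∀ i : Fin m, (b i : ℕ) = (i : ℕ) + m)
    (ε : Fin m → Fin m → ℤ)
    (hε0 : ∀ i, ε i i = 0)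
    (hε1 : ∀ i j, i ≠ j → ε i j = 1 ∨ ε i j = -1)
    (hεanti : ∀ i j, ε j i = -ε i j)
    (hεbal : ∀ i, ∑ j : Fin m, ε i j = 0)
    (h : Finset (Fin v) → ℤ)
    (h1 : ∀ B : Finset (Fin v), B.card = 3 →
      Set.InjOn (fun x : Fin v => (x : ℕ) % m) ↑B →
      h B = (-1) ^ (B.filter (fun x : Fin v => m ≤ (x : ℕ))).card)
    (h2 : ∀ i j : Fin m, i ≠ j → h {a i, b i, a j} = ε i j ∧ h {a i, b i, b j} = ε i j)
    (h3 : ∀ B : Finset (Fin v),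
      ¬ (B.card = 3 ∧ Set.InjOn (fun x : Fin v => (x : ℕ) % m) ↑B) →
      (¬ ∃ i j : Fin m, i ≠ j ∧ (B = {a i, b i, a j} ∨ B = {a i, b i, b j})) →
      h B = 0) :
    isHalving v h :=
  partition_method_halving_general n v m hv hm a b ha hb ε hε0 hε1 hεanti hεbal h h1 h2 h3
end

section
/- Let n ≥ 2, v = 4n+2, m = 2n+1, and for i ∈ {0,...,2n} set a_i = i and b_i = i + m in Fin v. Let S' be a Steiner triple system on {0,...,2n-2} together with an orientation of its blocks, and let M be a partition of {0,...,2n-3} into (n-1) two-element subsets, each written as an ordered pair (i,j). Then the sum of (i) the minimal trades (a_{α0} a_{α1} a_{α2} ; b_{α0} b_{α1} b_{α2}) over all 3-element subsets {α0,α1,α2} of {0,...,2n}, (ii) for each oriented block of S', the directed-edge trades E(i,j) over its three directed edges, (iii) E(2n-2, 2n-1) + E(2n-1, 2n) + E(2n, 2n-2), and (iv) for each pair (i,j) of M, E(2n-1, i) + E(i, 2n) + E(2n, j) + E(j, 2n-1), is a (2,3,4n+2)-halving. -/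
/-!
Identify `Fin (4n+2)` with `Fin (2n+1) × Bool` through `aᵢ = (i, false)`, `bᵢ = (i, true)`.
A 3-set `B` either meets three different pairs `{aᵢ, bᵢ}` (it is transversal) or has the form
`{aᵢ, bᵢ, x}` with `x` in another pair `j`. Exactly one minimal trade is nonzero on a transversal
set, with value `(-1)^(number of b's in B)`, and all of them vanish on `{aᵢ, bᵢ, x}`. The
directed-edge trades vanish on transversal sets, and `E(u,w){aᵢ, bᵢ, x}` is `+1`, `-1` or `0`
according as `(u,w)` is `(i,j)`, `(j,i)` or neither. So `h {aᵢ, bᵢ, x} = ε(i,j)`, the signed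
number of arcs between `i` and `j`, which is `±1` because the arcs of the oriented blocks, the
triangle and the 4-cycles form a tournament on `Fin (2n+1)`. Pair balance then reduces to the
antisymmetry of `ε` and to `∑ⱼ ε(i,j) = 0`, i.e. in-degree equals out-degree at every vertex,
which holds because the arcs form a union of directed cycles.
-/

open Finset

lemma sum_filter_card_eq_superset {α M : Type*} [Fintype α] [DecidableEq α] [AddCommMonoid M]
    {k : ℕ} {f : Finset α → M} (hf : ∀ B : Finset α, B.card ≠ k → f B = 0) {P : Finset α}
    (hP : P.card + 1 = k) :
    ∑ B ∈ univ.filter (fun B : Finset α => B.card = k ∧ P ⊆ B), f B = ∑ x, f (insert x P) := by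
  have himage : univ.filter (fun B : Finset α => B.card = k ∧ P ⊆ B) =
      (univ \ P).image (insert · P) := by
    ext B
    have := exists_eq_insert_iff (s := P) (t := B)
    simp only [mem_filter, mem_univ, true_and, mem_image, mem_sdiff] at this ⊢
    rw [this, ← hP]
    tauto
  rw [himage, sum_image fun x hx y _ h => (insert_inj (mem_sdiff.mp hx).2).mp h,
    ← sum_sdiff (subset_univ P), sum_eq_zero (s := P) fun x hx => by
      rw [insert_eq_of_mem hx, hf P (by omega)], add_zero]

lemma pair_insert_comm {α : Type*} [DecidableEq α] (x y z : α) :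
    insert z ({x, y} : Finset α) = {x, y, z} := by
  rw [insert_comm, pair_comm z y]

lemma edgeTrade_self {v : ℕ} {ι : Type*} (a b : ι → Fin v) (u : ι) : edgeTrade v a b u u = 0 := by
  funext B
  simp [edgeTrade]

section EdgeSign

variable {ι : Type*} [DecidableEq ι]

def edgeSign (u w i j : ι) : ℤ :=
  (if u = i ∧ w = j then 1 else 0) - (if w = i ∧ u = j then 1 else 0)

lemma edgeSign_swap (u w i j : ι) : edgeSign u w j i = -edgeSign u w i j := by
  simp only [edgeSign, and_comm]
  ring

lemma map_edgeSign_swap (Φ : (ι → ι → ℤ) →+ ℤ) (i j : ι) :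
    Φ (fun u w => edgeSign u w j i) = -Φ (fun u w => edgeSign u w i j) := by
  rw [← map_neg]
  exact congrArg Φ (funext₂ fun u w => edgeSign_swap u w i j)

lemma sum_edgeSign [Fintype ι] (u w i : ι) :
    ∑ j, edgeSign u w i j = (if u = i then 1 else 0) - (if w = i then 1 else 0) := by
  simp [edgeSign, sum_sub_distrib, ite_and]

lemma edgeSign_triangle_eq_zero {t₁ t₂ t₃ i j : ι}
    (h : ¬((i = t₁ ∨ i = t₂ ∨ i = t₃) ∧ (j = t₁ ∨ j = t₂ ∨ j = t₃))) :
    edgeSign t₁ t₂ i j + edgeSign t₂ t₃ i j + edgeSign t₃ t₁ i j = 0 := by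
  simp only [edgeSign]; split_ifs <;> grind

lemma edgeSign_triangle_eq_one_or_neg_one {t₁ t₂ t₃ i j : ι} (h₁₂ : t₁ ≠ t₂) (h₁₃ : t₁ ≠ t₃)
    (h₂₃ : t₂ ≠ t₃) (hij : i ≠ j) (hi : i = t₁ ∨ i = t₂ ∨ i = t₃)
    (hj : j = t₁ ∨ j = t₂ ∨ j = t₃) :
    edgeSign t₁ t₂ i j + edgeSign t₂ t₃ i j + edgeSign t₃ t₁ i j = 1 ∨
      edgeSign t₁ t₂ i j + edgeSign t₂ t₃ i j + edgeSign t₃ t₁ i j = -1 := by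
  simp only [edgeSign]; split_ifs <;> grind

lemma edgeSign_square_eq_zero {d p e q i j : ι}
    (h : ¬((i = p ∨ i = q) ∧ (j = d ∨ j = e) ∨ (i = d ∨ i = e) ∧ (j = p ∨ j = q))) :
    edgeSign d p i j + edgeSign p e i j + edgeSign e q i j + edgeSign q d i j = 0 := by
  simp only [edgeSign]; split_ifs <;> grind

lemma edgeSign_square_eq_one_or_neg_one {d p e q i j : ι} (hde : d ≠ e) (hpq : p ≠ q)
    (hdp : d ≠ p) (hdq : d ≠ q) (hep : e ≠ p) (heq : e ≠ q) (hi : i = p ∨ i = q)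
    (hj : j = d ∨ j = e) :
    edgeSign d p i j + edgeSign p e i j + edgeSign e q i j + edgeSign q d i j = 1 ∨
      edgeSign d p i j + edgeSign p e i j + edgeSign e q i j + edgeSign q d i j = -1 := by
  simp only [edgeSign]; split_ifs <;> grind

end EdgeSign

section Pairing

variable {v : ℕ} {ι : Type*} (σ : ι × Bool ≃ Fin v)

lemma card_pair_insert {i : ι} {x : Fin v} (hx : (σ.symm x).1 ≠ i) :
    ({σ (i, false), σ (i, true), x} : Finset (Fin v)).card = 3 := by
  obtain ⟨⟨j, β⟩, rfl⟩ := σ.surjective x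
  simp only [Equiv.symm_apply_apply] at hx
  rw [card_eq_three]
  exact ⟨_, _, _, by simp, by simp [Ne.symm hx], by simp [Ne.symm hx], rfl⟩

lemma not_injOn_pair_insert (i : ι) (x : Fin v) :
    ¬ Set.InjOn (fun y => (σ.symm y).1) ({σ (i, false), σ (i, true), x} : Finset (Fin v)) :=
  fun h => by simpa using @h (σ (i, false)) (by simp) (σ (i, true)) (by simp) (by simp)

lemma exists_pair_insert_of_not_injOn {B : Finset (Fin v)} (hB : B.card = 3)
    (h : ¬ Set.InjOn (fun y => (σ.symm y).1) B) :
    ∃ i x, (σ.symm x).1 ≠ i ∧ B = {σ (i, false), σ (i, true), x} := by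
  obtain ⟨y, hy, z, hz, hyz, hne⟩ : ∃ y ∈ B, ∃ z ∈ B, (σ.symm y).1 = (σ.symm z).1 ∧ y ≠ z := by
    simpa [Set.InjOn] using h
  obtain ⟨⟨i, β⟩, rfl⟩ := σ.surjective y
  obtain ⟨⟨j, γ⟩, rfl⟩ := σ.surjective z
  simp only [Equiv.symm_apply_apply] at hyz
  subst hyz
  have hpair : ({σ (i, false), σ (i, true)} : Finset (Fin v)) ⊆ B := by
    cases β <;> cases γ <;> simp_all [insert_subset_iff]
  obtain ⟨x, hx, rfl⟩ := exists_eq_insert_iff.mpr ⟨hpair, by simp [hB]⟩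
  refine ⟨i, x, fun hxi => hx ?_, ?_⟩
  · obtain ⟨⟨j, γ⟩, rfl⟩ := σ.surjective x
    simp only [Equiv.symm_apply_apply] at hxi
    subst hxi
    cases γ <;> simp
  · ext; simp; tauto

lemma pair_insert_eq_pair_insert_iff [DecidableEq ι] {i u : ι} {x y : Fin v}
    (hx : (σ.symm x).1 ≠ i) (hy : (σ.symm y).1 ≠ u) :
    ({σ (i, false), σ (i, true), x} : Finset (Fin v)) = {σ (u, false), σ (u, true), y} ↔
      i = u ∧ x = y := by
  obtain ⟨⟨j, β⟩, rfl⟩ := σ.surjective x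
  obtain ⟨⟨k, γ⟩, rfl⟩ := σ.surjective y
  simp only [Equiv.symm_apply_apply] at hx hy
  refine ⟨fun h => ?_, by rintro ⟨rfl, h⟩; rw [h]⟩
  have hu0 : σ (u, false) ∈ ({σ (i, false), σ (i, true), σ (j, β)} : Finset (Fin v)) := by
    simp [h]
  have hu1 : σ (u, true) ∈ ({σ (i, false), σ (i, true), σ (j, β)} : Finset (Fin v)) := by
    simp [h]
  have hk : σ (k, γ) ∈ ({σ (i, false), σ (i, true), σ (j, β)} : Finset (Fin v)) := by
    simp [h]
  simp only [mem_insert, mem_singleton, EmbeddingLike.apply_eq_iff_eq, Prod.mk.injEq] at hu0 hu1 hk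
  grind

def levelSign (B : Finset (Fin v)) : ℤ := (-1) ^ #(B.filter fun x => (σ.symm x).2)

lemma levelSign_insert {x : Fin v} {B : Finset (Fin v)} (hx : x ∉ B) :
    levelSign σ (insert x B) = (if (σ.symm x).2 then -1 else 1) * levelSign σ B := by
  rw [levelSign, levelSign, filter_insert]
  split_ifs with h
  · rw [card_insert_of_notMem fun h' => hx (mem_filter.mp h').1, pow_succ, mul_comm]
  · rw [one_mul]

section MinimalTrade

variable {α : Fin 3 → ι}

lemma injective_choice (hα : Function.Injective α) (s : Fin 3 → Bool) :
    Function.Injective fun l => σ (α l, s l) :=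
  fun _ _ h => hα (congrArg Prod.fst (σ.injective h))

lemma levelSign_image_choice (hα : Function.Injective α) (s : Fin 3 → Bool) :
    levelSign σ (univ.image fun l => σ (α l, s l)) = (-1) ^ #(univ.filter fun l => s l) := by
  rw [levelSign, filter_image, card_image_of_injective _ (injective_choice σ hα s)]
  simp

lemma image_choice_injective (hα : Function.Injective α) :
    Function.Injective fun s : Fin 3 → Bool => univ.image fun l => σ (α l, s l) := by
  intro s t h
  funext l
  have hl : σ (α l, s l) ∈ univ.image fun l => σ (α l, t l) := by
    rw [← show (univ.image fun l => σ (α l, s l)) = univ.image fun l => σ (α l, t l) from h]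
    exact mem_image_of_mem _ (mem_univ l)
  obtain ⟨l', -, hl'⟩ := mem_image.mp hl
  obtain ⟨hll', hst⟩ := Prod.mk.inj (σ.injective hl')
  rw [hα hll'] at hst
  exact hst.symm

lemma exists_eq_image_choice_iff [DecidableEq ι] (hα : Function.Injective α) (B : Finset (Fin v)) :
    (∃ s : Fin 3 → Bool, B = univ.image fun l => σ (α l, s l)) ↔
      Set.InjOn (fun x => (σ.symm x).1) B ∧ B.image (fun x => (σ.symm x).1) = univ.image α := by
  constructor
  · rintro ⟨s, rfl⟩
    refine ⟨?_, by rw [image_image]; congr 1; funext l; simp⟩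
    rintro _ hx _ hy hxy
    obtain ⟨l, -, rfl⟩ := mem_image.mp hx
    obtain ⟨l', -, rfl⟩ := mem_image.mp hy
    simp only [Equiv.symm_apply_apply] at hxy
    rw [hα hxy]
  · rintro ⟨hinj, himage⟩
    refine ⟨fun l => decide (σ (α l, true) ∈ B), (eq_of_subset_of_card_le ?_ ?_).symm⟩
    · rintro _ hx
      obtain ⟨l, -, rfl⟩ := mem_image.mp hx
      obtain ⟨x, hxB, hxl⟩ := mem_image.mp (himage ▸ mem_image_of_mem α (mem_univ l))
      obtain ⟨⟨j, γ⟩, rfl⟩ := σ.surjective x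
      simp only [Equiv.symm_apply_apply] at hxl
      subst hxl
      cases γ <;> by_cases h : σ (α l, true) ∈ B <;> simp_all
    · rw [card_image_of_injective _ (injective_choice σ hα _), ← card_image_of_injOn hinj, himage,
        card_image_of_injective _ hα]

lemma minimalTrade_apply_s8 [DecidableEq ι] (hα : Function.Injective α) (B : Finset (Fin v)) :
    minimalTrade v (fun k => σ (α k, false)) (fun k => σ (α k, true)) B =
      if Set.InjOn (fun x => (σ.symm x).1) B ∧ B.image (fun x => (σ.symm x).1) = univ.image α
      then levelSign σ B else 0 := by
  have hchoice : ∀ s : Fin 3 → Bool,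
      (univ.image fun l => if s l then σ (α l, true) else σ (α l, false)) =
        univ.image fun l => σ (α l, s l) := fun s => by
    congr 1; funext l; cases s l <;> rfl
  simp only [minimalTrade, hchoice, ← exists_eq_image_choice_iff σ hα]
  split_ifs with h
  · obtain ⟨s, rfl⟩ := h
    rw [sum_eq_single s (fun t _ hts => by simp [(image_choice_injective σ hα).ne hts.symm])
      (by simp), levelSign_image_choice σ hα]
    simp
  · push Not at h
    exact sum_eq_zero fun s _ => by simp [h s]

lemma sum_minimalTrade_powersetCard [Fintype ι] [DecidableEq ι]
    {α : (univ.powersetCard 3 : Finset (Finset ι)) → Fin 3 → ι}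
    (hα : ∀ s, univ.image (α s) = s.1) (B : Finset (Fin v)) :
    ∑ s ∈ (univ.powersetCard 3).attach,
        minimalTrade v (fun k => σ (α s k, false)) (fun k => σ (α s k, true)) B =
      if B.card = 3 ∧ Set.InjOn (fun x => (σ.symm x).1) B then levelSign σ B else 0 := by
  have hαinj : ∀ s, Function.Injective (α s) := fun s => by
    have := card_image_iff.mp <| by
      rw [hα s, (mem_powersetCard.mp s.2).2, card_univ, Fintype.card_fin]
    rwa [coe_univ, Set.injOn_univ] at this
  simp only [minimalTrade_apply_s8 σ (hαinj _), hα]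
  split_ifs with hB
  · have hmem : B.image (fun x => (σ.symm x).1) ∈ univ.powersetCard 3 :=
      mem_powersetCard.mpr ⟨subset_univ _, by rw [card_image_of_injOn hB.2, hB.1]⟩
    rw [sum_eq_single_of_mem ⟨_, hmem⟩ (mem_attach _ _) fun s _ hs => if_neg fun h => hs ?_]
    · simp [hB.2]
    · exact Subtype.ext h.2.symm
  · refine sum_eq_zero fun s _ => if_neg fun h => hB ⟨?_, h.1⟩
    rw [← card_image_of_injOn h.1, h.2, (mem_powersetCard.mp s.2).2]

end MinimalTrade

lemma edgeTrade_pair_insert [DecidableEq ι] (u w : ι) {i : ι} {x : Fin v}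
    (hx : (σ.symm x).1 ≠ i) :
    edgeTrade v (fun i => σ (i, false)) (fun i => σ (i, true)) u w
        {σ (i, false), σ (i, true), x} = edgeSign u w i (σ.symm x).1 := by
  obtain rfl | huw := eq_or_ne u w
  · simp [edgeTrade_self, edgeSign]
  have hw : ∀ β, (σ.symm (σ (w, β))).1 ≠ u := by simpa using huw.symm
  have hu : ∀ β, (σ.symm (σ (u, β))).1 ≠ w := by simpa using huw
  simp only [edgeTrade, pair_insert_eq_pair_insert_iff σ hx (hw _),
    pair_insert_eq_pair_insert_iff σ hx (hu _)]
  obtain ⟨⟨j, γ⟩, rfl⟩ := σ.surjective x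
  cases γ <;> simp [edgeSign, eq_comm]

lemma edgeTrade_eq_zero [DecidableEq ι] (u w : ι) {B : Finset (Fin v)}
    (hB : ∀ i x, (σ.symm x).1 ≠ i → B ≠ {σ (i, false), σ (i, true), x}) :
    edgeTrade v (fun i => σ (i, false)) (fun i => σ (i, true)) u w B = 0 := by
  obtain rfl | huw := eq_or_ne u w
  · simp [edgeTrade_self]
  simp [edgeTrade, hB u, hB w, huw, huw.symm]

variable {f : Finset (Fin v) → ℤ} {ε : ι → ι → ℤ}

lemma sum_bool_insert_pair (hf : ∀ B : Finset (Fin v), B.card ≠ 3 → f B = 0)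
    (hε : ∀ i x, (σ.symm x).1 ≠ i → f {σ (i, false), σ (i, true), x} = ε i (σ.symm x).1)
    (i : ι) (β : Bool) {z : Fin v} (hz : (σ.symm z).1 ≠ i) :
    f (insert (σ (i, true)) {σ (i, β), z}) + f (insert (σ (i, false)) {σ (i, β), z}) =
      ε i (σ.symm z).1 := by
  have hpair : ({σ (i, β), z} : Finset (Fin v)).card ≠ 3 := by
    have := card_le_two (a := σ (i, β)) (b := z); omega
  cases β
  · rw [insert_eq_of_mem (mem_insert_self _ _), hf _ hpair, add_zero, insert_comm,
      ← hε i z hz]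
  · rw [insert_eq_of_mem (mem_insert_self _ _), hf _ hpair, zero_add, hε i z hz]

lemma sum_bool_insert_transversal
    (hf : ∀ B : Finset (Fin v), B.card = 3 → Set.InjOn (fun x => (σ.symm x).1) B →
      f B = levelSign σ B)
    {i j k : ι} (hij : i ≠ j) (hki : k ≠ i) (hkj : k ≠ j) (β γ : Bool) :
    f (insert (σ (k, true)) {σ (i, β), σ (j, γ)}) +
      f (insert (σ (k, false)) {σ (i, β), σ (j, γ)}) = 0 := by
  have hmem : ∀ δ, σ (k, δ) ∉ ({σ (i, β), σ (j, γ)} : Finset (Fin v)) := by simp [hki, hkj]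
  have hcard : ∀ δ, (insert (σ (k, δ)) {σ (i, β), σ (j, γ)} : Finset (Fin v)).card = 3 :=
    fun δ => by rw [card_insert_of_notMem (hmem δ), card_pair (by simp [hij])]
  have hinj : ∀ δ, Set.InjOn (fun x => (σ.symm x).1)
      ↑(insert (σ (k, δ)) {σ (i, β), σ (j, γ)} : Finset (Fin v)) := fun δ => by
    rw [coe_insert, Set.injOn_insert (by simpa using hmem δ), coe_pair, Set.injOn_pair]
    simp [hij, hki.symm, hkj.symm]
  rw [hf _ (hcard true) (hinj true), hf _ (hcard false) (hinj false),
    levelSign_insert σ (hmem true), levelSign_insert σ (hmem false)]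
  simp

lemma isTrade_of_forall_apply [Fintype ι] [DecidableEq ι]
    (hanti : ∀ i j, ε j i = -ε i j) (hrow : ∀ i, ∑ j, ε i j = 0)
    (hf : ∀ B : Finset (Fin v), B.card ≠ 3 → f B = 0)
    (hT : ∀ B : Finset (Fin v), B.card = 3 → Set.InjOn (fun x => (σ.symm x).1) B →
      f B = levelSign σ B)
    (hε : ∀ i x, (σ.symm x).1 ≠ i → f {σ (i, false), σ (i, true), x} = ε i (σ.symm x).1) :
    isTrade v f := by
  refine ⟨hf, fun P hP => ?_⟩
  rw [sum_filter_card_eq_superset hf (by rw [hP]), ← σ.sum_comp, Fintype.sum_prod_type]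
  simp only [Fintype.sum_bool]
  obtain ⟨y, z, hyz, rfl⟩ := card_eq_two.mp hP
  obtain ⟨⟨i, β⟩, rfl⟩ := σ.surjective y
  obtain ⟨⟨j, γ⟩, rfl⟩ := σ.surjective z
  obtain rfl | hij := eq_or_ne i j
  · have hpair : ({σ (i, β), σ (i, γ)} : Finset (Fin v)) = {σ (i, false), σ (i, true)} := by
      cases β <;> cases γ <;> first | exact absurd rfl hyz | rfl | exact pair_comm _ _
    rw [hpair]
    calc _ = ∑ k, 2 * ε i k := sum_congr rfl fun k _ => ?_
      _ = 0 := by rw [← mul_sum, hrow, mul_zero]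
    obtain rfl | hki := eq_or_ne k i
    · have hpair0 : f {σ (k, false), σ (k, true)} = 0 :=
        hf _ (by rw [card_pair (by simp)]; decide)
      have hins : ∀ δ, insert (σ (k, δ)) {σ (k, false), σ (k, true)} =
          ({σ (k, false), σ (k, true)} : Finset (Fin v)) :=
        fun δ => insert_eq_of_mem (by cases δ <;> simp)
      rw [hins, hins, hpair0]
      linarith [hanti k k]
    · rw [pair_insert_comm (σ (i, false)), pair_insert_comm (σ (i, false)),
        hε i _ (by simpa), hε i _ (by simpa)]
      simp only [Equiv.symm_apply_apply]
      ring
  · rw [Fintype.sum_eq_add i j hij fun k hk => sum_bool_insert_transversal σ hT hij hk.1 hk.2 β γ,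
      sum_bool_insert_pair σ hf hε i β (by simpa using hij.symm), pair_comm,
      sum_bool_insert_pair σ hf hε j γ (by simpa using hij)]
    simp only [Equiv.symm_apply_apply, hanti i j, add_neg_cancel]

lemma isHalving_of_forall_apply [Fintype ι] [DecidableEq ι]
    (hanti : ∀ i j, ε j i = -ε i j) (hrow : ∀ i, ∑ j, ε i j = 0)
    (hpm : ∀ i j, i ≠ j → ε i j = 1 ∨ ε i j = -1)
    (hf : ∀ B : Finset (Fin v), B.card ≠ 3 → f B = 0)
    (hT : ∀ B : Finset (Fin v), B.card = 3 → Set.InjOn (fun x => (σ.symm x).1) B →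
      f B = levelSign σ B)
    (hε : ∀ i x, (σ.symm x).1 ≠ i → f {σ (i, false), σ (i, true), x} = ε i (σ.symm x).1) :
    isHalving v f := by
  have hvalue : ∀ B : Finset (Fin v), B.card = 3 → f B = 1 ∨ f B = -1 := by
    intro B hB
    by_cases hinj : Set.InjOn (fun x => (σ.symm x).1) B
    · rw [hT B hB hinj]
      exact neg_one_pow_eq_or ℤ _
    · obtain ⟨i, x, hx, rfl⟩ := exists_pair_insert_of_not_injOn σ hB hinj
      rw [hε i x hx]
      exact hpm _ _ (Ne.symm hx)
  refine ⟨isTrade_of_forall_apply σ hanti hrow hf hT hε, fun B => ?_, hvalue⟩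
  by_cases hB : B.card = 3
  · rcases hvalue B hB with h | h <;> simp [h]
  · simp [hf B hB]

end Pairing

/-- `Φ` stands for summation over the arcs of a directed multigraph on `ι`: `hΦ` says that every
vertex has equal in- and out-degree, `htour` that the signed number of arcs between two distinct
vertices is `±1`. -/
theorem isHalving_sum_minimalTrade_add_edgeTrade {v : ℕ} {ι : Type*} [Fintype ι] [DecidableEq ι]
    (σ : ι × Bool ≃ Fin v) (Φ : (ι → ι → ℤ) →+ ℤ)
    (hΦ : ∀ g : ι → ℤ, Φ (fun u w => g u - g w) = 0)
    (htour : ∀ i j, i ≠ j →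
      Φ (fun u w => edgeSign u w i j) = 1 ∨ Φ (fun u w => edgeSign u w i j) = -1)
    {α : (univ.powersetCard 3 : Finset (Finset ι)) → Fin 3 → ι}
    (hα : ∀ s, univ.image (α s) = s.1) :
    isHalving v fun B =>
      ∑ s ∈ (univ.powersetCard 3).attach,
          minimalTrade v (fun k => σ (α s k, false)) (fun k => σ (α s k, true)) B +
        Φ fun u w => edgeTrade v (fun i => σ (i, false)) (fun i => σ (i, true)) u w B := by
  have hedge : ∀ B : Finset (Fin v),
      (∀ i x, (σ.symm x).1 ≠ i → B ≠ {σ (i, false), σ (i, true), x}) →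
      (Φ fun u w => edgeTrade v (fun i => σ (i, false)) (fun i => σ (i, true)) u w B) = 0 :=
    fun B hB => by
      rw [show (fun u w => edgeTrade v _ _ u w B) = 0 from
        funext₂ fun u w => edgeTrade_eq_zero σ u w hB, map_zero]
  refine isHalving_of_forall_apply σ (ε := fun i j => Φ fun u w => edgeSign u w i j)
    (map_edgeSign_swap Φ) (fun i => ?_) htour
    (fun B hB => ?_) (fun B hB hinj => ?_) (fun i x hx => ?_)
  · rw [← map_sum]
    convert hΦ fun u => if u = i then 1 else 0 using 2
    funext u w
    simp only [Finset.sum_apply, sum_edgeSign]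
  · rw [sum_minimalTrade_powersetCard σ hα, if_neg fun h => hB h.1, hedge B
      fun i x hx h => hB (h ▸ card_pair_insert σ hx), zero_add]
  · rw [sum_minimalTrade_powersetCard σ hα, if_pos ⟨hB, hinj⟩, hedge B
      fun i x _ h => not_injOn_pair_insert σ i x (h ▸ hinj), add_zero]
  · rw [sum_minimalTrade_powersetCard σ hα, if_neg fun h => not_injOn_pair_insert σ i x h.2,
      zero_add]
    simp only [edgeTrade_pair_insert σ _ _ hx]

section Tournament

variable {ι : Type*}

@[simps]
def cycleSum (S : Finset (ι × ι × ι)) (M : Finset (ι × ι)) (c d e : ι) :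
    (ι → ι → ℤ) →+ ℤ where
  toFun F := (∑ t ∈ S, (F t.1 t.2.1 + F t.2.1 t.2.2 + F t.2.2 t.1)) + (F c d + F d e + F e c) +
    ∑ p ∈ M, (F d p.1 + F p.1 e + F e p.2 + F p.2 d)
  map_zero' := by simp
  map_add' F G := by simp only [Pi.add_apply, sum_add_distrib]; ring

lemma cycleSum_sub (S : Finset (ι × ι × ι)) (M : Finset (ι × ι)) (c d e : ι) (g : ι → ℤ) :
    cycleSum S M c d e (fun u w => g u - g w) = 0 := by
  rw [cycleSum_apply, sum_eq_zero fun _ _ => by ring, sum_eq_zero fun _ _ => by ring]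
  ring

/-- `S` is an oriented Steiner triple system on `Y = Z ∪ {c}`, `M` splits `Z` into ordered pairs,
and the whole vertex set is `Y ∪ {d, e}`. -/
structure IsSTSMatching (S : Finset (ι × ι × ι)) (M : Finset (ι × ι)) (c d e : ι)
    (Y Z : Set ι) : Prop where
  block_ne : ∀ t ∈ S, t.1 ≠ t.2.1 ∧ t.1 ≠ t.2.2 ∧ t.2.1 ≠ t.2.2
  block_mem : ∀ t ∈ S, t.1 ∈ Y ∧ t.2.1 ∈ Y ∧ t.2.2 ∈ Y
  existsUnique_block : ∀ x y, x ∈ Y → y ∈ Y → x ≠ y → ∃! t, t ∈ S ∧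
    (x = t.1 ∨ x = t.2.1 ∨ x = t.2.2) ∧ (y = t.1 ∨ y = t.2.1 ∨ y = t.2.2)
  pair_ne : ∀ p ∈ M, p.1 ≠ p.2 ∧ p.1 ∈ Z ∧ p.2 ∈ Z
  existsUnique_pair : ∀ x, x ∈ Z → ∃! p, p ∈ M ∧ (x = p.1 ∨ x = p.2)
  mem_iff : ∀ x, x ∈ Y ↔ x ∈ Z ∨ x = c
  c_notMem : c ∉ Z
  d_notMem : d ∉ Y
  e_notMem : e ∉ Y
  d_ne_e : d ≠ e
  eq_or_eq_of_notMem : ∀ x, x ∉ Y → x = d ∨ x = e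

namespace IsSTSMatching

variable {S : Finset (ι × ι × ι)} {M : Finset (ι × ι)} {c d e : ι} {Y Z : Set ι}

lemma mem_of_mem_Z (h : IsSTSMatching S M c d e Y Z) {x : ι} (hx : x ∈ Z) : x ∈ Y :=
  (h.mem_iff x).mpr (Or.inl hx)

lemma c_mem (h : IsSTSMatching S M c d e Y Z) : c ∈ Y := (h.mem_iff c).mpr (Or.inr rfl)

lemma ne_d_of_mem (h : IsSTSMatching S M c d e Y Z) {x : ι} (hx : x ∈ Y) : x ≠ d :=
  fun hxd => h.d_notMem (hxd ▸ hx)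

lemma ne_e_of_mem (h : IsSTSMatching S M c d e Y Z) {x : ι} (hx : x ∈ Y) : x ≠ e :=
  fun hxe => h.e_notMem (hxe ▸ hx)

variable [DecidableEq ι]

lemma sum_blocks_eq_zero (h : IsSTSMatching S M c d e Y Z) {i j : ι} (hj : j ∉ Y) :
    ∑ t ∈ S, (edgeSign t.1 t.2.1 i j + edgeSign t.2.1 t.2.2 i j + edgeSign t.2.2 t.1 i j) = 0 :=
  sum_eq_zero fun t ht => edgeSign_triangle_eq_zero fun ⟨_, hjt⟩ => by
    obtain ⟨h₁, h₂, h₃⟩ := h.block_mem t ht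
    rcases hjt with rfl | rfl | rfl <;> contradiction

lemma cycleSum_edgeSign_of_mem_of_mem (h : IsSTSMatching S M c d e Y Z) {i j : ι} (hij : i ≠ j)
    (hi : i ∈ Y) (hj : j ∈ Y) :
    cycleSum S M c d e (fun u w => edgeSign u w i j) = 1 ∨
      cycleSum S M c d e (fun u w => edgeSign u w i j) = -1 := by
  obtain ⟨t₀, ⟨ht₀, hit₀, hjt₀⟩, huniq⟩ := h.existsUnique_block i j hi hj hij
  have hid := h.ne_d_of_mem hi
  have hie := h.ne_e_of_mem hi
  have hjd := h.ne_d_of_mem hj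
  have hje := h.ne_e_of_mem hj
  obtain ⟨h₁₂, h₁₃, h₂₃⟩ := h.block_ne t₀ ht₀
  rw [cycleSum_apply, sum_eq_single_of_mem t₀ ht₀ fun t ht hne =>
      edgeSign_triangle_eq_zero fun ⟨hit, hjt⟩ => hne (huniq t ⟨ht, hit, hjt⟩),
    edgeSign_triangle_eq_zero (t₁ := c) (t₂ := d) (t₃ := e) (by grind),
    sum_eq_zero fun p _ => edgeSign_square_eq_zero (by tauto), add_zero, add_zero]
  exact edgeSign_triangle_eq_one_or_neg_one h₁₂ h₁₃ h₂₃ hij hit₀ hjt₀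

lemma cycleSum_edgeSign_of_mem_Z (h : IsSTSMatching S M c d e Y Z) {i j : ι} (hi : i ∈ Z)
    (hj : j = d ∨ j = e) :
    cycleSum S M c d e (fun u w => edgeSign u w i j) = 1 ∨
      cycleSum S M c d e (fun u w => edgeSign u w i j) = -1 := by
  have hjY : j ∉ Y := by rcases hj with rfl | rfl <;> [exact h.d_notMem; exact h.e_notMem]
  have hic : i ≠ c := fun hic => h.c_notMem (hic ▸ hi)
  have hid := h.ne_d_of_mem (h.mem_of_mem_Z hi)
  have hie := h.ne_e_of_mem (h.mem_of_mem_Z hi)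
  obtain ⟨p₀, ⟨hp₀, hip₀⟩, huniq⟩ := h.existsUnique_pair i hi
  obtain ⟨hpq, hp, hq⟩ := h.pair_ne p₀ hp₀
  have hpY := h.mem_of_mem_Z hp
  have hqY := h.mem_of_mem_Z hq
  rw [cycleSum_apply, h.sum_blocks_eq_zero hjY,
    edgeSign_triangle_eq_zero (t₁ := c) (t₂ := d) (t₃ := e) (by tauto),
    sum_eq_single_of_mem p₀ hp₀ fun p hp hne => edgeSign_square_eq_zero ?_, zero_add, zero_add]
  · exact edgeSign_square_eq_one_or_neg_one h.d_ne_e hpq (h.ne_d_of_mem hpY).symm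
      (h.ne_d_of_mem hqY).symm (h.ne_e_of_mem hpY).symm (h.ne_e_of_mem hqY).symm hip₀ hj
  · have hip : ¬(i = p.1 ∨ i = p.2) := fun hip => hne (huniq p ⟨hp, hip⟩)
    obtain ⟨-, hp₁, hp₂⟩ := h.pair_ne p hp
    have := h.mem_of_mem_Z hp₁
    have := h.mem_of_mem_Z hp₂
    grind

lemma cycleSum_edgeSign_of_triangle (h : IsSTSMatching S M c d e Y Z) {i j : ι} (hij : i ≠ j)
    (hi : i = c ∨ i = d ∨ i = e) (hj : j = d ∨ j = e) :
    cycleSum S M c d e (fun u w => edgeSign u w i j) = 1 ∨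
      cycleSum S M c d e (fun u w => edgeSign u w i j) = -1 := by
  have hjY : j ∉ Y := by rcases hj with rfl | rfl <;> [exact h.d_notMem; exact h.e_notMem]
  have hcd := h.ne_d_of_mem h.c_mem
  have hce := h.ne_e_of_mem h.c_mem
  rw [cycleSum_apply, h.sum_blocks_eq_zero hjY, sum_eq_zero fun p hp => edgeSign_square_eq_zero ?_,
    zero_add, add_zero]
  · exact edgeSign_triangle_eq_one_or_neg_one hcd hce h.d_ne_e hij hi (Or.inr hj)
  · obtain ⟨-, hp₁, hp₂⟩ := h.pair_ne p hp
    have := h.mem_of_mem_Z hp₁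
    have := h.mem_of_mem_Z hp₂
    have := h.c_notMem
    grind [h.ne_d_of_mem, h.ne_e_of_mem]

theorem cycleSum_edgeSign_eq_one_or_neg_one (h : IsSTSMatching S M c d e Y Z)
    {i j : ι} (hij : i ≠ j) :
    cycleSum S M c d e (fun u w => edgeSign u w i j) = 1 ∨
      cycleSum S M c d e (fun u w => edgeSign u w i j) = -1 := by
  have of_notMem : ∀ {i j : ι}, i ≠ j → j ∉ Y →
      cycleSum S M c d e (fun u w => edgeSign u w i j) = 1 ∨
        cycleSum S M c d e (fun u w => edgeSign u w i j) = -1 := fun {i j} hij hj => by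
    have hj' := h.eq_or_eq_of_notMem j hj
    by_cases hiZ : i ∈ Z
    · exact h.cycleSum_edgeSign_of_mem_Z hiZ hj'
    refine h.cycleSum_edgeSign_of_triangle hij ?_ hj'
    by_cases hiY : i ∈ Y
    · exact Or.inl (((h.mem_iff i).mp hiY).resolve_left hiZ)
    · exact Or.inr (h.eq_or_eq_of_notMem i hiY)
  by_cases hj : j ∈ Y
  · by_cases hi : i ∈ Y
    · exact h.cycleSum_edgeSign_of_mem_of_mem hij hi hj
    · rw [map_edgeSign_swap (cycleSum S M c d e) j i]
      rcases of_notMem hij.symm hi with h' | h' <;> simp [h']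
  · exact of_notMem hij hj

end IsSTSMatching

end Tournament

lemma exists_prodBoolEquiv {ι : Type*} [Fintype ι] {v : ℕ} {a b : ι → Fin v}
    (ha : Function.Injective a) (hb : Function.Injective b) (hab : ∀ i j, a i ≠ b j)
    (hv : Fintype.card ι * 2 = v) :
    ∃ σ : ι × Bool ≃ Fin v, (fun i => σ (i, false)) = a ∧ (fun i => σ (i, true)) = b := by
  let f : ι × Bool → Fin v := fun p => if p.2 then b p.1 else a p.1
  have hf : Function.Injective f := by
    rintro ⟨i, _ | _⟩ ⟨j, _ | _⟩ h
    · exact congrArg (·, false) (ha h)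
    · exact absurd h (hab i j)
    · exact absurd h.symm (hab j i)
    · exact congrArg (·, true) (hb h)
  exact ⟨Equiv.ofBijective f ((Fintype.bijective_iff_injective_and_card f).mpr
    ⟨hf, by simp [hv]⟩), rfl, rfl⟩

theorem sts_matching_partition_halving_general
    (n : ℕ) (hn : 2 ≤ n) (v m : ℕ) (hv : v = 4 * n + 2) (hm : m = 2 * n + 1)
    (a b : Fin m → Fin v)
    (ha : ∀ i : Fin m, (a i : ℕ) = (i : ℕ)) (hb : ∀ i : Fin m, (b i : ℕ) = (i : ℕ) + m)
    (S : Finset (Fin m × Fin m × Fin m))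
    (hSdist : ∀ t ∈ S, t.1 ≠ t.2.1 ∧ t.1 ≠ t.2.2 ∧ t.2.1 ≠ t.2.2)
    (hSsub : ∀ t ∈ S, (t.1 : ℕ) < 2 * n - 1 ∧ (t.2.1 : ℕ) < 2 * n - 1 ∧ (t.2.2 : ℕ) < 2 * n - 1)
    (hSsts : ∀ x y : Fin m, (x : ℕ) < 2 * n - 1 → (y : ℕ) < 2 * n - 1 → x ≠ y → ∃! t, t ∈ S ∧
      (x = t.1 ∨ x = t.2.1 ∨ x = t.2.2) ∧ (y = t.1 ∨ y = t.2.1 ∨ y = t.2.2))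
    (M : Finset (Fin m × Fin m))
    (hMdist : ∀ p ∈ M, p.1 ≠ p.2 ∧ (p.1 : ℕ) < 2 * n - 2 ∧ (p.2 : ℕ) < 2 * n - 2)
    (hMcover : ∀ x : Fin m, (x : ℕ) < 2 * n - 2 → ∃! p, p ∈ M ∧ (x = p.1 ∨ x = p.2))
    (c d e : Fin m) (hc : (c : ℕ) = 2 * n - 2) (hd : (d : ℕ) = 2 * n - 1) (he : (e : ℕ) = 2 * n)
    (h : Finset (Fin v) → ℤ)
    (hh : h = fun B =>
      (∑ s ∈ ((Finset.univ : Finset (Fin m)).powersetCard 3).attach,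
        minimalTrade v
          (fun k => a ((s.1.orderIsoOfFin (Finset.mem_powersetCard.mp s.2).2) k))
          (fun k => b ((s.1.orderIsoOfFin (Finset.mem_powersetCard.mp s.2).2) k)) B) +
      (∑ t ∈ S, (edgeTrade v a b t.1 t.2.1 B + edgeTrade v a b t.2.1 t.2.2 B +
        edgeTrade v a b t.2.2 t.1 B)) +
      (edgeTrade v a b c d B + edgeTrade v a b d e B + edgeTrade v a b e c B) +
      ∑ p ∈ M, (edgeTrade v a b d p.1 B + edgeTrade v a b p.1 e B +
        edgeTrade v a b e p.2 B + edgeTrade v a b p.2 d B)) :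
    isHalving v h := by
  obtain ⟨σ, rfl, rfl⟩ := exists_prodBoolEquiv (a := a) (b := b)
    (fun i j hij => Fin.ext (by simpa [ha] using congrArg Fin.val hij))
    (fun i j hij => Fin.ext (by simpa [hb] using congrArg Fin.val hij))
    (fun i j hij => by have := congrArg Fin.val hij; rw [ha, hb] at this; omega)
    (by simp; omega)
  have hSTS : IsSTSMatching S M c d e {x | (x : ℕ) < 2 * n - 1} {x | (x : ℕ) < 2 * n - 2} :=
    { block_ne := hSdist
      block_mem := hSsub
      existsUnique_block := hSsts
      pair_ne := hMdist
      existsUnique_pair := hMcover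
      mem_iff := fun x => by simp only [Set.mem_ofPred_eq, Fin.ext_iff, hc]; omega
      c_notMem := by simp [hc]
      d_notMem := by simp [hd]
      e_notMem := by simp [he]
      d_ne_e := by simp [Fin.ext_iff, hd, he]; omega
      eq_or_eq_of_notMem := fun x hx => by
        simp only [Set.mem_ofPred_eq, Fin.ext_iff, hd, he] at hx ⊢; omega }
  subst hh
  convert isHalving_sum_minimalTrade_add_edgeTrade σ (cycleSum S M c d e) (cycleSum_sub S M c d e)
    (fun i j hij => hSTS.cycleSum_edgeSign_eq_one_or_neg_one hij)
    (α := fun s k => s.1.orderIsoOfFin (mem_powersetCard.mp s.2).2 k)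
    (fun s => by simpa only [coe_orderIsoOfFin_apply] using image_orderEmbOfFin_univ s.1 _)
    using 1
  funext B
  simp only [cycleSum_apply]
  ring

/-- For `n ≥ 2`, `v = 4n+2`, `m = 2n+1`, `aᵢ = i`, `bᵢ = i + m`, an oriented
Steiner triple system `S'` on `{0,…,2n-2}` and a perfect matching `M` on `{0,…,2n-3}` into
`n-1` ordered pairs, the sum of (i) the minimal trades over all 3-subsets of `{0,…,2n}`,
(ii) the directed-edge trades of the oriented blocks of `S'`, (iii) the triangle
`E(2n-2,2n-1) + E(2n-1,2n) + E(2n,2n-2)`, and (iv) for each pair `(i,j)` of `M` the 4-cycle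
`E(2n-1,i) + E(i,2n) + E(2n,j) + E(j,2n-1)`, is a `(2,3,4n+2)`-halving. -/
theorem sts_matching_partition_halving
    (n : ℕ) (hn : 2 ≤ n) (v m : ℕ) (hv : v = 4 * n + 2) (hm : m = 2 * n + 1)
    (a b : Fin m → Fin v)
    (ha : ∀ i : Fin m, (a i : ℕ) = (i : ℕ)) (hb : ∀ i : Fin m, (b i : ℕ) = (i : ℕ) + m)
    (S : Finset (Fin m × Fin m × Fin m))
    (hSdist : ∀ t ∈ S, t.1 ≠ t.2.1 ∧ t.1 ≠ t.2.2 ∧ t.2.1 ≠ t.2.2)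
    (hSsub : ∀ t ∈ S, (t.1 : ℕ) < 2 * n - 1 ∧ (t.2.1 : ℕ) < 2 * n - 1 ∧ (t.2.2 : ℕ) < 2 * n - 1)
    (hSsts : ∀ x y : Fin m, (x : ℕ) < 2 * n - 1 → (y : ℕ) < 2 * n - 1 → x ≠ y → ∃! t, t ∈ S ∧
      (x = t.1 ∨ x = t.2.1 ∨ x = t.2.2) ∧ (y = t.1 ∨ y = t.2.1 ∨ y = t.2.2))
    (M : Finset (Fin m × Fin m))
    (hMdist : ∀ p ∈ M, p.1 ≠ p.2 ∧ (p.1 : ℕ) < 2 * n - 2 ∧ (p.2 : ℕ) < 2 * n - 2)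
    (hMcover : ∀ x : Fin m, (x : ℕ) < 2 * n - 2 → ∃! p, p ∈ M ∧ (x = p.1 ∨ x = p.2))
    (hMcard : M.card = n - 1)
    (c d e : Fin m) (hc : (c : ℕ) = 2 * n - 2) (hd : (d : ℕ) = 2 * n - 1) (he : (e : ℕ) = 2 * n)
    (h : Finset (Fin v) → ℤ)
    (hh : h = fun B =>
      (∑ s ∈ ((Finset.univ : Finset (Fin m)).powersetCard 3).attach,
        minimalTrade v
          (fun k => a ((s.1.orderIsoOfFin (Finset.mem_powersetCard.mp s.2).2) k))
          (fun k => b ((s.1.orderIsoOfFin (Finset.mem_powersetCard.mp s.2).2) k)) B) +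
      (∑ t ∈ S, (edgeTrade v a b t.1 t.2.1 B + edgeTrade v a b t.2.1 t.2.2 B +
        edgeTrade v a b t.2.2 t.1 B)) +
      (edgeTrade v a b c d B + edgeTrade v a b d e B + edgeTrade v a b e c B) +
      ∑ p ∈ M, (edgeTrade v a b d p.1 B + edgeTrade v a b p.1 e B +
        edgeTrade v a b e p.2 B + edgeTrade v a b p.2 d B)) :
    isHalving v h :=
  sts_matching_partition_halving_general n hn v m hv hm a b ha hb S hSdist hSsub hSsts M hMdist
    hMcover c d e hc hd he h hh
end
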